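/- arXiv:2312.09229 — 8 statements merged into one kernel-verified Lean document; each statement's English description precedes it below -/
import Mathlib

section
/- Let n ≥ 1 and let h : 𝔻ⁿ → ℂ be holomorphic on the open unit polydisc 𝔻ⁿ := {w ∈ ℂⁿ : max_j |w_j| < 1}, with Re h(w) > 0 for all w ∈ 𝔻ⁿ and h(0) = 1. Then for every w ∈ 𝔻ⁿ, |h(w)| ≤ (1 + ‖w‖)/(1 − ‖w‖), where ‖w‖ := max_{1≤j≤n} |w_j|. -/
open Metric Set

private lemma abs_sub_one_lt_abs_add_one {a : ℂ} (ha : 0 < a.re) :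
    ‖a - 1‖ < ‖a + 1‖ := by
  have h1 : Complex.normSq (a - 1) < Complex.normSq (a + 1) := by
    simp only [Complex.normSq_apply, Complex.sub_re, Complex.sub_im, Complex.add_re,
      Complex.add_im, Complex.one_re, Complex.one_im]
    nlinarith
  have := Real.sqrt_lt_sqrt (Complex.normSq_nonneg _) h1
  simpa [Complex.norm_def] using this

private lemma one_var_bound {f : ℂ → ℂ}
    (hf : DifferentiableOn ℂ f (ball 0 1))
    (hre : ∀ z ∈ ball (0:ℂ) 1, 0 < (f z).re)
    (h0 : f 0 = 1) {z : ℂ} (hz : ‖z‖ < 1) :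
    ‖f z‖ ≤ (1 + ‖z‖) / (1 - ‖z‖) := by
  have hz' : z ∈ ball (0:ℂ) 1 := by simpa [Complex.norm_def] using hz
  have hne : ∀ x ∈ ball (0:ℂ) 1, f x + 1 ≠ 0 := by
    intro x hx hc
    have := hre x hx
    have : (f x + 1).re = (f x).re + 1 := by simp
    rw [hc] at this
    simp at this
    linarith [hre x hx]
  set φ : ℂ → ℂ := fun x => (f x - 1) / (f x + 1) with hφ
  have hφd : DifferentiableOn ℂ φ (ball 0 1) :=
    (hf.sub (differentiableOn_const 1)).div (hf.add (differentiableOn_const 1)) hne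
  have hφmaps : MapsTo φ (ball (0:ℂ) 1) (ball (0:ℂ) 1) := by
    intro x hx
    have hlt := abs_sub_one_lt_abs_add_one (hre x hx)
    have hpos : 0 < ‖f x + 1‖ :=
      norm_pos_iff.2 (hne x hx)
    rw [mem_ball_zero_iff]
    simp only [hφ]
    rw [norm_div, div_lt_one hpos]
    exact hlt
  have hφ0 : φ 0 = 0 := by simp [hφ, h0]
  have hSch : ‖φ z‖ ≤ ‖z‖ :=
    Complex.norm_le_norm_of_mapsTo_ball hφd (hφmaps.mono_right ball_subset_closedBall) hφ0 hz
  have hφlt : ‖φ z‖ < 1 := lt_of_le_of_lt hSch hz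
  -- f z = (1 + φ z) / (1 - φ z)
  have hdenne : f z + 1 ≠ 0 := hne z hz'
  have hkey : f z * (1 - φ z) = 1 + φ z := by
    have : φ z * (f z + 1) = f z - 1 := by
      simp only [hφ]; field_simp
    ring_nf
    ring_nf at this
    linear_combination -this
  have h1φ : (1 : ℝ) - ‖z‖ ≤ ‖1 - φ z‖ := by
    calc (1:ℝ) - ‖z‖ ≤ 1 - ‖φ z‖ := by linarith
    _ ≤ ‖1 - φ z‖ := by
        have := norm_sub_norm_le (1:ℂ) (φ z)
        simpa using this
  have hpos' : (0:ℝ) < 1 - ‖z‖ := by linarith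
  have hnum : ‖1 + φ z‖ ≤ 1 + ‖z‖ := by
    calc ‖1 + φ z‖ ≤ ‖(1:ℂ)‖ + ‖φ z‖ :=
          norm_add_le _ _
    _ ≤ 1 + ‖z‖ := by simpa using hSch
  have hden0 : (1 : ℂ) - φ z ≠ 0 := by
    intro hc
    have : ‖1 - φ z‖ = 0 := by rw [hc]; simp
    have := h1φ
    rw [‹‖1 - φ z‖ = 0›] at this
    linarith
  have habs : ‖f z‖ * ‖1 - φ z‖ = ‖1 + φ z‖ := by
    rw [← norm_mul, hkey]
  have hdenpos : 0 < ‖1 - φ z‖ := norm_pos_iff.2 hden0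
  have heq : ‖f z‖ = ‖1 + φ z‖ / ‖1 - φ z‖ :=
    (eq_div_iff hdenpos.ne').2 habs
  rw [heq]
  apply div_le_div₀ (by positivity) hnum hpos' h1φ

/-- If `h` is holomorphic on the open unit polydisc
`𝔻ⁿ = {w ∈ ℂⁿ : max_j |w_j| < 1}` (here `‖w‖` is the sup-norm on `ℂⁿ`), has positive real
part there, and `h(0) = 1`, then `|h(w)| ≤ (1 + ‖w‖)/(1 − ‖w‖)` on `𝔻ⁿ`. -/
theorem abs_le_of_pos_re_on_polydisc
    (n : ℕ) (hn : 1 ≤ n) (h : (Fin n → ℂ) → ℂ)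
    (hhol : DifferentiableOn ℂ h {w : Fin n → ℂ | ‖w‖ < 1})
    (hre : ∀ w : Fin n → ℂ, ‖w‖ < 1 → 0 < (h w).re)
    (h0 : h 0 = 1) :
    ∀ w : Fin n → ℂ, ‖w‖ < 1 → ‖h w‖ ≤ (1 + ‖w‖) / (1 - ‖w‖) := by
  intro w hw
  rcases eq_or_ne w 0 with rfl | hw0
  · simp [h0]
  · set r : ℝ := ‖w‖ with hr
    have hrpos : 0 < r := norm_pos_iff.2 hw0
    set u : Fin n → ℂ := ((r : ℂ)⁻¹) • w with hu
    have hnormu : ∀ z : ℂ, ‖z • u‖ = ‖z‖ := by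
      intro z
      rw [hu, smul_smul, norm_smul]
      have : ‖(r:ℂ)⁻¹‖ = r⁻¹ := by
        rw [norm_inv, Complex.norm_real, Real.norm_eq_abs, abs_of_pos hrpos]
      rw [norm_mul, this, ← hr]
      field_simp
    set f : ℂ → ℂ := fun z => h (z • u) with hf
    have hsm : Differentiable ℂ (fun z : ℂ => z • u) := by
      exact (differentiable_id).smul_const u
    have hmaps : MapsTo (fun z : ℂ => z • u) (ball (0:ℂ) 1)
        {w : Fin n → ℂ | ‖w‖ < 1} := by
      intro z hz
      simp only [mem_setOf_eq, hnormu z]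
      simpa [Complex.norm_def] using hz
    have hfd : DifferentiableOn ℂ f (ball 0 1) :=
      hhol.comp hsm.differentiableOn hmaps
    have hfre : ∀ z ∈ ball (0:ℂ) 1, 0 < (f z).re := by
      intro z hz
      exact hre _ (hmaps hz)
    have hf0 : f 0 = 1 := by simp [hf, h0]
    have hzr : ‖((r : ℂ))‖ < 1 := by
      rwa [Complex.norm_real, Real.norm_eq_abs, abs_of_pos hrpos]
    have := one_var_bound hfd hfre hf0 hzr
    have hfr : f (r : ℂ) = h w := by
      show h ((r:ℂ) • ((r:ℂ)⁻¹ • w)) = h w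
      congr 1
      rw [smul_smul]
      have : (r:ℂ) * (r:ℂ)⁻¹ = 1 := by
        field_simp [Complex.ofReal_ne_zero.2 hrpos.ne']
      rw [this, one_smul]
    rw [hfr, Complex.norm_real, Real.norm_eq_abs, abs_of_pos hrpos] at this
    exact this
end

section
/- Let μ be a positive measure on ℝ₊ⁿ∖{0} with ∫ min(1, Σ_j u_j) dμ(u) < ∞, and define ψ(z) := ∫_{ℝ₊ⁿ∖{0}} (e^{z·u} − 1) dμ(u) for z ∈ ℂⁿ with Re z_j ≤ 0 for all j. Suppose θ ∈ (0, π/2) is such that for every β > 0 and every z ∈ ℂⁿ with Re z_j < 0 for all j, the complex number β − ψ(z) lies in the open sector {w ∈ ℂ : Re w > 0, |arg w| < π/2 − θ}. Then for every x ∈ [1,∞)ⁿ one has −ψ(−x) ≤ A ‖x‖^γ, where ‖x‖ := max_j x_j, A := −ψ(−1,…,−1) and γ := 1 − 2θ/π. -/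
/-!
Substituting `z = -s (1, …, 1)` turns `-ψ` into the Laplace exponent
`φ(s) = ∫ (1 - e^{-s Σ_j u_j}) dμ(u)` of one complex variable, holomorphic on the right
half-plane and real on `(0, ∞)`. For `β > 0` the function `β + φ` takes values in the sector of
half-angle `π/2 - θ = γπ/2`, so `(β + φ)^{1/γ}` maps the right half-plane into itself. The
Schwarz lemma, transported to the half-plane by the Cayley transform, gives
`(β + φ(t))^{1/γ} ≤ t (β + φ(1))^{1/γ}` for `t ≥ 1`; letting `β → 0` yields
`φ(t) ≤ t^γ φ(1)`. Finally `-ψ(-x) ≤ φ(‖x‖)` because `x·u ≤ ‖x‖ Σ_j u_j` on `ℝ₊ⁿ`.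
-/

open MeasureTheory Metric Set

/-- The positive orthant `ℝ₊ⁿ = [0,∞)ⁿ`. -/
def posOrthant (n : ℕ) : Set (Fin n → ℝ) := {u | ∀ j, 0 ≤ u j}

def rightHalfPlane : Set ℂ := {z | 0 < z.re}

def sector (α : ℝ) : Set ℂ := {w | 0 < w.re ∧ |w.arg| < α}

noncomputable def cayley (z : ℂ) : ℂ := (z - 1) / (z + 1)

noncomputable def cayleyInv (w : ℂ) : ℂ := (1 + w) / (1 - w)

lemma mem_rightHalfPlane {z : ℂ} : z ∈ rightHalfPlane ↔ 0 < z.re := Iff.rfl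

lemma isOpen_rightHalfPlane : IsOpen rightHalfPlane :=
  isOpen_lt continuous_const Complex.continuous_re

lemma one_mem_rightHalfPlane : (1 : ℂ) ∈ rightHalfPlane := by simp [mem_rightHalfPlane]

lemma ofReal_mem_rightHalfPlane {t : ℝ} : (t : ℂ) ∈ rightHalfPlane ↔ 0 < t := by
  simp [mem_rightHalfPlane]

lemma add_one_ne_zero_of_mem_rightHalfPlane {z : ℂ} (hz : z ∈ rightHalfPlane) : z + 1 ≠ 0 :=
  fun h => by
    have := congrArg Complex.re h
    simp only [Complex.add_re, Complex.one_re, Complex.zero_re] at this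
    linarith [mem_rightHalfPlane.mp hz]

lemma one_sub_ne_zero_of_norm_lt_one {w : ℂ} (hw : ‖w‖ < 1) : 1 - w ≠ 0 :=
  sub_ne_zero.mpr fun h => by simp [← h] at hw

lemma norm_cayley_lt_one {z : ℂ} (hz : z ∈ rightHalfPlane) : ‖cayley z‖ < 1 := by
  rw [cayley, norm_div, div_lt_one (norm_pos_iff.mpr (add_one_ne_zero_of_mem_rightHalfPlane hz)),
    ← sq_lt_sq₀ (norm_nonneg _) (norm_nonneg _), Complex.sq_norm, Complex.sq_norm,
    Complex.normSq_sub, Complex.normSq_add]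
  simp only [map_one, mul_one]
  linarith [mem_rightHalfPlane.mp hz]

lemma cayleyInv_mem_rightHalfPlane {w : ℂ} (hw : ‖w‖ < 1) : cayleyInv w ∈ rightHalfPlane := by
  have hw2 : Complex.normSq w < 1 := by
    rw [← Complex.sq_norm]
    nlinarith [norm_nonneg w]
  have hre : (cayleyInv w).re = (1 - Complex.normSq w) / Complex.normSq (1 - w) := by
    rw [cayleyInv, Complex.div_re, Complex.normSq_apply w]
    simp only [Complex.add_re, Complex.sub_re, Complex.add_im, Complex.sub_im, Complex.one_re,
      Complex.one_im]
    ring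
  rw [mem_rightHalfPlane, hre]
  exact div_pos (by linarith) (Complex.normSq_pos.mpr (one_sub_ne_zero_of_norm_lt_one hw))

lemma cayleyInv_cayley {z : ℂ} (hz : z + 1 ≠ 0) : cayleyInv (cayley z) = z := by
  rw [cayleyInv, cayley]
  field_simp
  ring

lemma cayley_ofReal (x : ℝ) : cayley x = ((x - 1) / (x + 1) : ℝ) := by
  simp [cayley]

lemma differentiableAt_cayley {z : ℂ} (hz : z + 1 ≠ 0) : DifferentiableAt ℂ cayley z :=
  (differentiableAt_id.sub_const 1).div (differentiableAt_id.add_const 1) hz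

lemma differentiableAt_cayleyInv {w : ℂ} (hw : 1 - w ≠ 0) : DifferentiableAt ℂ cayleyInv w :=
  (differentiableAt_id.const_add 1).div (differentiableAt_id.const_sub 1) hw

lemma norm_cayley_le_of_mapsTo {Φ : ℂ → ℂ} (hd : DifferentiableOn ℂ Φ rightHalfPlane)
    (hm : MapsTo Φ rightHalfPlane rightHalfPlane) (h1 : Φ 1 = 1) {z : ℂ} (hz : z ∈ rightHalfPlane) :
    ‖cayley (Φ z)‖ ≤ ‖cayley z‖ := by
  have hdiff : DifferentiableOn ℂ (cayley ∘ Φ ∘ cayleyInv) (ball 0 1) := by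
    intro w hw
    have hw1 : ‖w‖ < 1 := mem_ball_zero_iff.mp hw
    have hΦw := hm (cayleyInv_mem_rightHalfPlane hw1)
    refine DifferentiableAt.differentiableWithinAt ?_
    refine (differentiableAt_cayley (add_one_ne_zero_of_mem_rightHalfPlane hΦw)).comp w
      ((hd.differentiableAt (isOpen_rightHalfPlane.mem_nhds ?_)).comp w
        (differentiableAt_cayleyInv (one_sub_ne_zero_of_norm_lt_one hw1)))
    exact cayleyInv_mem_rightHalfPlane hw1
  have hmaps : MapsTo (cayley ∘ Φ ∘ cayleyInv) (ball 0 1) (closedBall 0 1) := fun w hw =>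
    mem_closedBall_zero_iff.mpr (norm_cayley_lt_one
      (hm (cayleyInv_mem_rightHalfPlane (mem_ball_zero_iff.mp hw)))).le
  have h0 : (cayley ∘ Φ ∘ cayleyInv) 0 = 0 := by simp [cayleyInv, h1, cayley]
  simpa [cayleyInv_cayley (add_one_ne_zero_of_mem_rightHalfPlane hz)] using
    Complex.norm_le_norm_of_mapsTo_ball hdiff hmaps h0 (norm_cayley_lt_one hz)

lemma le_mul_of_mapsTo_rightHalfPlane {Φ : ℂ → ℂ} (hd : DifferentiableOn ℂ Φ rightHalfPlane)
    (hm : MapsTo Φ rightHalfPlane rightHalfPlane) {t P Q : ℝ} (ht : 1 ≤ t) (hP : Φ t = P)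
    (hQ : Φ 1 = Q) : P ≤ t * Q := by
  have ht0 : (t : ℂ) ∈ rightHalfPlane := ofReal_mem_rightHalfPlane.mpr (by linarith)
  have hQ0 : 0 < Q := ofReal_mem_rightHalfPlane.mp (hQ ▸ hm one_mem_rightHalfPlane)
  have hP0 : 0 < P := ofReal_mem_rightHalfPlane.mp (hP ▸ hm ht0)
  have hΨm : MapsTo (fun z => Φ z / Q) rightHalfPlane rightHalfPlane := fun z hz => by
    simpa only [mem_rightHalfPlane, Complex.div_ofReal_re] using div_pos (hm hz) hQ0
  have hcayley := norm_cayley_le_of_mapsTo (hd.div_const (Q : ℂ)) hΨm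
    (by simp [hQ, hQ0.ne']) ht0
  rw [hP, ← Complex.ofReal_div, cayley_ofReal, cayley_ofReal, Complex.norm_real,
    Complex.norm_real, Real.norm_eq_abs, Real.norm_eq_abs,
    abs_of_nonneg (a := (t - 1) / (t + 1)) (div_nonneg (by linarith) (by linarith))] at hcayley
  have hPQ : P / Q ≤ t := by
    have hPQ0 : 0 < P / Q := div_pos hP0 hQ0
    have := (le_abs_self _).trans hcayley
    rw [div_le_div_iff₀ (by linarith) (by linarith)] at this
    linarith
  rwa [div_le_iff₀ hQ0] at hPQ

lemma mapsTo_cpow_sector {α p : ℝ} (hp : 0 < p) (hpα : p * α ≤ Real.pi / 2) :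
    MapsTo (fun w : ℂ => w ^ (p : ℂ)) (sector α) rightHalfPlane := by
  rintro w ⟨hre, harg⟩
  have hw : w ≠ 0 := fun h => by simp [h] at hre
  show 0 < (w ^ (p : ℂ)).re
  rw [Complex.cpow_def_of_ne_zero hw, Complex.exp_re]
  refine mul_pos (Real.exp_pos _) (Real.cos_pos_of_mem_Ioo ?_)
  rw [show (Complex.log w * p).im = w.arg * p by simp [Complex.log_im], mem_Ioo, ← abs_lt,
    abs_mul, abs_of_pos hp]
  calc |w.arg| * p < α * p := by gcongr
    _ ≤ Real.pi / 2 := by linarith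

lemma add_le_rpow_mul_of_mapsTo_sector {g : ℂ → ℂ} {α β t a b : ℝ} (hα : 0 < α)
    (hg : DifferentiableOn ℂ g rightHalfPlane)
    (hsector : MapsTo (fun z => β + g z) rightHalfPlane (sector α))
    (ht : 1 ≤ t) (hgt : g t = a) (hg1 : g 1 = b) :
    β + a ≤ t ^ (2 * α / Real.pi) * (β + b) := by
  set p : ℝ := Real.pi / (2 * α) with hp
  have hp0 : 0 < p := by positivity
  have hd : DifferentiableOn ℂ (fun z => (β + g z) ^ (p : ℂ)) rightHalfPlane := fun z hz =>
    ((hg.differentiableAt (isOpen_rightHalfPlane.mem_nhds hz)).const_add _).cpow_const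
      (Complex.mem_slitPlane_iff.mpr (.inl (hsector hz).1)) |>.differentiableWithinAt
  have hm : MapsTo (fun z => (β + g z) ^ (p : ℂ)) rightHalfPlane rightHalfPlane :=
    (mapsTo_cpow_sector hp0 (by rw [hp]; field_simp; rfl)).comp hsector
  have hreal {s c : ℝ} (hs0 : 0 < s) (hs : g s = c) :
      0 < β + c ∧ (β + g s) ^ (p : ℂ) = ((β + c) ^ p : ℝ) := by
    have hpos : 0 < β + c := by
      simpa [hs] using (hsector (ofReal_mem_rightHalfPlane.mpr hs0)).1
    refine ⟨hpos, ?_⟩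
    rw [hs, Complex.ofReal_cpow hpos.le]
    push_cast
    rfl
  obtain ⟨hat, hΦt⟩ := hreal (by linarith) hgt
  obtain ⟨hb1, hΦ1⟩ := hreal (s := 1) one_pos (by exact_mod_cast hg1)
  have hΦ := le_mul_of_mapsTo_rightHalfPlane hd hm ht hΦt (by exact_mod_cast hΦ1)
  calc β + a = ((β + a) ^ p) ^ p⁻¹ := (Real.rpow_rpow_inv hat.le hp0.ne').symm
    _ ≤ (t * (β + b) ^ p) ^ p⁻¹ := by gcongr
    _ = t ^ (2 * α / Real.pi) * (β + b) := by
      rw [Real.mul_rpow (by linarith) (by positivity), Real.rpow_rpow_inv hb1.le hp0.ne', hp,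
        inv_div]

open Filter Topology in
lemma le_rpow_mul_of_forall_mapsTo_sector {g : ℂ → ℂ} {α t a b : ℝ} (hα : 0 < α)
    (hg : DifferentiableOn ℂ g rightHalfPlane)
    (hsector : ∀ β : ℝ, 0 < β → MapsTo (fun z => β + g z) rightHalfPlane (sector α))
    (ht : 1 ≤ t) (hgt : g t = a) (hg1 : g 1 = b) :
    a ≤ t ^ (2 * α / Real.pi) * b := by
  have hlim : Tendsto (fun β : ℝ => t ^ (2 * α / Real.pi) * (β + b) - β) (𝓝[>] 0)
      (𝓝 (t ^ (2 * α / Real.pi) * b)) := by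
    have : Continuous (fun β : ℝ => t ^ (2 * α / Real.pi) * (β + b) - β) := by fun_prop
    simpa using (this.tendsto 0).mono_left nhdsWithin_le_nhds
  refine ge_of_tendsto hlim (eventually_nhdsWithin_of_forall fun β hβ => ?_)
  linarith [add_le_rpow_mul_of_mapsTo_sector hα hg (hsector β hβ) ht hgt hg1]

lemma norm_one_sub_cexp_neg_mul_le {z : ℂ} {s : ℝ} (hz : 0 ≤ z.re) (hs : 0 ≤ s) :
    ‖1 - Complex.exp (-(z * s))‖ ≤ 2 * (‖z‖ + 1) * min 1 s := by
  have hnorm : ‖-(z * s)‖ = ‖z‖ * s := by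
    rw [norm_neg, norm_mul, Complex.norm_real, Real.norm_of_nonneg hs]
  have htwo : ‖1 - Complex.exp (-(z * s))‖ ≤ 2 := by
    have hexp : ‖Complex.exp (-(z * s))‖ ≤ 1 := by
      rw [Complex.norm_exp, Real.exp_le_one_iff]
      simpa using mul_nonneg hz hs
    linarith [norm_sub_le (1 : ℂ) (Complex.exp (-(z * s))), norm_one (α := ℂ)]
  have hlin (h : ‖z‖ * s ≤ 1) : ‖1 - Complex.exp (-(z * s))‖ ≤ 2 * (‖z‖ * s) := by
    rw [norm_sub_rev, ← hnorm]
    exact Complex.norm_exp_sub_one_le (hnorm ▸ h)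
  have hz0 := norm_nonneg z
  rcases le_total s 1 with hs1 | hs1
  · rw [min_eq_right hs1]
    rcases le_total (‖z‖ * s) 1 with h | h
    · nlinarith [hlin h]
    · nlinarith
  · rw [min_eq_left hs1]
    nlinarith

lemma norm_cexp_neg_mul_mul_le {z : ℂ} {ε s : ℝ} (hε : 0 < ε) (hz : ε ≤ z.re) (hs : 0 ≤ s) :
    ‖Complex.exp (-(z * s)) * s‖ ≤ (1 + ε⁻¹) * min 1 s := by
  have hnorm : ‖Complex.exp (-(z * s)) * s‖ = s * Real.exp (-(z.re * s)) := by
    rw [norm_mul, Complex.norm_real, Real.norm_of_nonneg hs, Complex.norm_exp, mul_comm]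
    simp
  have hle : Real.exp (-(z.re * s)) ≤ Real.exp (-(ε * s)) := by
    gcongr
  have hexp1 : Real.exp (-(ε * s)) ≤ 1 := Real.exp_le_one_iff.mpr (by nlinarith)
  have hdecay : ε * s * Real.exp (-(ε * s)) ≤ 1 := by
    rw [Real.exp_neg, mul_inv_le_iff₀ (Real.exp_pos _)]
    linarith [Real.add_one_le_exp (ε * s)]
  rw [hnorm]
  have hinv : 0 < ε⁻¹ := inv_pos.mpr hε
  rcases le_total s 1 with hs1 | hs1
  · rw [min_eq_right hs1]
    nlinarith [Real.exp_pos (-(ε * s))]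
  · rw [min_eq_left hs1]
    have : s * Real.exp (-(ε * s)) ≤ ε⁻¹ := by
      rw [← one_div, le_div_iff₀ hε]
      linarith
    nlinarith [Real.exp_pos (-(z.re * s))]

section LaplaceExponent

variable {Ω : Type*} [MeasurableSpace Ω] {μ : Measure Ω} {T : Ω → ℝ}

noncomputable def laplaceExponent (μ : Measure Ω) (T : Ω → ℝ) (z : ℂ) : ℂ :=
  ∫ a, (1 - Complex.exp (-(z * T a))) ∂μ

lemma laplaceExponent_ofReal (μ : Measure Ω) (T : Ω → ℝ) (t : ℝ) :
    laplaceExponent μ T t = ((∫ a, (1 - Real.exp (-(t * T a))) ∂μ : ℝ) : ℂ) := by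
  have hreal (a : Ω) : 1 - Complex.exp (-(t * T a)) = ((1 - Real.exp (-(t * T a)) : ℝ) : ℂ) := by
    push_cast
    rfl
  simp only [laplaceExponent, hreal]
  exact integral_ofReal

lemma ofReal_re_laplaceExponent (μ : Measure Ω) (T : Ω → ℝ) (t : ℝ) :
    ((laplaceExponent μ T t).re : ℂ) = laplaceExponent μ T t := by
  rw [laplaceExponent_ofReal, Complex.ofReal_re]

lemma integrable_one_sub_cexp_neg_mul (hT : Measurable T) (hT0 : ∀ᵐ a ∂μ, 0 ≤ T a)
    (hint : Integrable (fun a => min 1 (T a)) μ) {z : ℂ} (hz : 0 ≤ z.re) :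
    Integrable (fun a => 1 - Complex.exp (-(z * T a))) μ :=
  (hint.const_mul _).mono' (by fun_prop : Measurable _).aestronglyMeasurable
    (hT0.mono fun _ ha => norm_one_sub_cexp_neg_mul_le hz ha)

lemma integrable_one_sub_exp_neg_mul (hT : Measurable T) (hT0 : ∀ᵐ a ∂μ, 0 ≤ T a)
    (hint : Integrable (fun a => min 1 (T a)) μ) {t : ℝ} (ht : 0 ≤ t) :
    Integrable (fun a => 1 - Real.exp (-(t * T a))) μ := by
  refine (integrable_one_sub_cexp_neg_mul hT hT0 hint (z := t) (by simpa using ht)).re.congr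
    (.of_forall fun a => ?_)
  simp [← Complex.ofReal_mul, ← Complex.ofReal_neg, Complex.exp_ofReal_re]

lemma differentiableOn_laplaceExponent (hT : Measurable T) (hT0 : ∀ᵐ a ∂μ, 0 ≤ T a)
    (hint : Integrable (fun a => min 1 (T a)) μ) :
    DifferentiableOn ℂ (laplaceExponent μ T) rightHalfPlane := by
  intro z₀ hz₀
  set ε := z₀.re / 2 with hε_def
  have hε : 0 < ε := half_pos hz₀
  have hball (z : ℂ) (hz : z ∈ ball z₀ ε) : ε ≤ z.re := by
    have := (Complex.abs_re_le_norm (z - z₀)).trans_lt (mem_ball_iff_norm.mp hz)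
    rw [Complex.sub_re, abs_lt] at this
    linarith
  have hderiv (a : Ω) (z : ℂ) : HasDerivAt (fun z => 1 - Complex.exp (-(z * T a)))
      (Complex.exp (-(z * T a)) * T a) z := by
    simpa using (((hasDerivAt_mul_const (T a : ℂ)).neg).cexp).const_sub 1
  have hmeas (z : ℂ) : AEStronglyMeasurable (fun a => 1 - Complex.exp (-(z * T a))) μ :=
    (by fun_prop : Measurable fun a => 1 - Complex.exp (-(z * T a))).aestronglyMeasurable
  have hmeas' : AEStronglyMeasurable (fun a => Complex.exp (-(z₀ * T a)) * T a) μ :=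
    (by fun_prop : Measurable fun a => Complex.exp (-(z₀ * T a)) * T a).aestronglyMeasurable
  have hF := hasDerivAt_integral_of_dominated_loc_of_deriv_le (ball_mem_nhds z₀ hε)
    (F' := fun z a => Complex.exp (-(z * T a)) * T a)
    (bound := fun a => (1 + ε⁻¹) * min 1 (T a))
    (.of_forall hmeas) (integrable_one_sub_cexp_neg_mul hT hT0 hint hz₀.le) hmeas'
    (hT0.mono fun a ha z hz => norm_cexp_neg_mul_mul_le hε (hball z hz) ha)
    (hint.const_mul _) (.of_forall fun a z _ => hderiv a z)
  exact hF.2.differentiableAt.differentiableWithinAt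

end LaplaceExponent

lemma integral_cexp_sum_neg_mul_sub_one {n : ℕ} (μ : Measure (Fin n → ℝ)) (z : ℂ) :
    ∫ u, (Complex.exp (∑ j, -z * (u j : ℂ)) - 1) ∂μ
      = -laplaceExponent μ (fun u => ∑ j, u j) z := by
  rw [laplaceExponent, ← integral_neg]
  congr! 2 with u
  simp [← Finset.mul_sum]

lemma neg_re_integral_cexp_sum_sub_one_le {n : ℕ} {μ : Measure (Fin n → ℝ)}
    (hsupp : ∀ᵐ u ∂μ, u ∈ posOrthant n) (hint : Integrable (fun u => min 1 (∑ j, u j)) μ)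
    {x : Fin n → ℝ} (hx : ∀ j, 0 ≤ x j) :
    -(∫ u, (Complex.exp (∑ j, (-(x j) : ℂ) * (u j : ℂ)) - 1) ∂μ).re
      ≤ (laplaceExponent μ (fun u => ∑ j, u j) ‖x‖).re := by
  have hreal (u : Fin n → ℝ) : Complex.exp (∑ j, (-(x j) : ℂ) * (u j : ℂ)) - 1
      = ((-(1 - Real.exp (-∑ j, x j * u j)) : ℝ) : ℂ) := by
    push_cast
    simp [Finset.sum_neg_distrib]
  have hT0 : ∀ᵐ u ∂μ, 0 ≤ ∑ j, u j := hsupp.mono fun _ hu => Finset.sum_nonneg fun j _ => hu j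
  simp only [hreal, integral_complex_ofReal, Complex.ofReal_re, integral_neg, neg_neg,
    laplaceExponent_ofReal]
  refine integral_mono_of_nonneg (hsupp.mono fun u hu => ?_)
    (integrable_one_sub_exp_neg_mul (by fun_prop) hT0 hint (norm_nonneg x))
    (hsupp.mono fun u hu => ?_)
  · have : 0 ≤ ∑ j, x j * u j := Finset.sum_nonneg fun j _ => mul_nonneg (hx j) (hu j)
    exact sub_nonneg.mpr (Real.exp_le_one_iff.mpr (neg_nonpos.mpr this))
  · have : ∑ j, x j * u j ≤ ‖x‖ * ∑ j, u j := by
      rw [Finset.mul_sum]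
      exact Finset.sum_le_sum fun j _ =>
        mul_le_mul_of_nonneg_right ((le_abs_self _).trans (norm_le_pi_norm x j)) (hu j)
    show 1 - Real.exp (-∑ j, x j * u j) ≤ 1 - Real.exp (-(‖x‖ * ∑ j, u j))
    gcongr

/-- Let `μ` be a positive measure on `ℝ₊ⁿ∖{0}` with
`∫ min(1, Σ_j u_j) dμ(u) < ∞` and `ψ(z) = ∫ (e^{z·u} − 1) dμ(u)` for `Re z_j ≤ 0`.
If `θ ∈ (0, π/2)` is such that for every `β > 0` and every `z` with `Re z_j < 0` the number
`β − ψ(z)` lies in the sector `{Re w > 0, |arg w| < π/2 − θ}`, then for every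
`x ∈ [1,∞)ⁿ` one has `−ψ(−x) ≤ A ‖x‖^γ` with `A = −ψ(−1,…,−1)`, `γ = 1 − 2θ/π`,
`‖x‖ = max_j x_j` (the sup-norm, since all `x_j ≥ 1`). -/
theorem psi_growth_of_sector_mapping
    (n : ℕ) (hn : 1 ≤ n) (μ : Measure (Fin n → ℝ))
    (hμsupp : μ {u | ¬(u ∈ posOrthant n ∧ u ≠ 0)} = 0)
    (hμint : ∫⁻ u, ENNReal.ofReal (min 1 (∑ j, u j)) ∂μ < ⊤)
    (θ : ℝ) (hθ : θ ∈ Set.Ioo 0 (Real.pi / 2))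
    (hsector : ∀ β : ℝ, 0 < β → ∀ z : Fin n → ℂ, (∀ j, (z j).re < 0) →
      0 < ((β : ℂ) - ∫ u, (Complex.exp (∑ j, z j * (u j : ℂ)) - 1) ∂μ).re ∧
      |((β : ℂ) - ∫ u, (Complex.exp (∑ j, z j * (u j : ℂ)) - 1) ∂μ).arg|
        < Real.pi / 2 - θ)
    (x : Fin n → ℝ) (hx : ∀ j, 1 ≤ x j) :
    -(∫ u, (Complex.exp (∑ j, (-(x j) : ℂ) * (u j : ℂ)) - 1) ∂μ).re
      ≤ (-(∫ u, (Complex.exp (∑ j, (-1 : ℂ) * (u j : ℂ)) - 1) ∂μ).re)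
          * ‖x‖ ^ (1 - 2 * θ / Real.pi) := by
  have hsupp : ∀ᵐ u ∂μ, u ∈ posOrthant n := (ae_iff.mpr hμsupp).mono fun _ hu => hu.1
  have hT0 : ∀ᵐ u ∂μ, 0 ≤ ∑ j, u j := hsupp.mono fun _ hu => Finset.sum_nonneg fun j _ => hu j
  have hint : Integrable (fun u => min 1 (∑ j, u j)) μ :=
    ⟨(by fun_prop : Measurable fun u : Fin n → ℝ => min 1 (∑ j, u j)).aestronglyMeasurable,
      (hasFiniteIntegral_iff_ofReal (hT0.mono fun _ hu => le_min zero_le_one hu)).mpr hμint⟩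
  have hφ_sector (β : ℝ) (hβ : 0 < β) :
      MapsTo (fun z => β + laplaceExponent μ (fun u => ∑ j, u j) z) rightHalfPlane
        (sector (Real.pi / 2 - θ)) := fun z hz => by
    have h := hsector β hβ (fun _ => -z) fun _ => neg_lt_zero.mpr hz
    beta_reduce at h
    rwa [integral_cexp_sum_neg_mul_sub_one, sub_neg_eq_add] at h
  have hnorm : 1 ≤ ‖x‖ := (hx ⟨0, hn⟩).trans ((le_abs_self _).trans (norm_le_pi_norm x _))
  have hγ : 1 - 2 * θ / Real.pi = 2 * (Real.pi / 2 - θ) / Real.pi := by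
    field_simp
  calc _ ≤ (laplaceExponent μ (fun u => ∑ j, u j) ‖x‖).re :=
        neg_re_integral_cexp_sum_sub_one_le hsupp hint fun j => zero_le_one.trans (hx j)
    _ ≤ ‖x‖ ^ (1 - 2 * θ / Real.pi) * (laplaceExponent μ (fun u => ∑ j, u j) 1).re := by
      rw [hγ]
      exact le_rpow_mul_of_forall_mapsTo_sector (by linarith [hθ.2])
        (differentiableOn_laplaceExponent (by fun_prop) hT0 hint) hφ_sector hnorm
        (ofReal_re_laplaceExponent μ _ _).symm
        (by exact_mod_cast (ofReal_re_laplaceExponent μ _ 1).symm)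
    _ = _ := by
      rw [integral_cexp_sum_neg_mul_sub_one, Complex.neg_re, neg_neg, mul_comm]
end

section
/- Let μ be a positive measure on ℝ₊ⁿ∖{0} with ∫ min(1, Σ_j u_j) dμ(u) < ∞, and define ψ(z) := ∫_{ℝ₊ⁿ∖{0}} (e^{z·u} − 1) dμ(u) for z ∈ ℂⁿ with Re z_j ≤ 0 for all j. Suppose there exist A > 0 and γ ∈ (0,1) such that −ψ(−c,…,−c) ≤ A c^γ for every real c ≥ 1. Then, with σ := 1 − e^{−1}, for every z ∈ ℂⁿ with Re z_j ≤ 0 for all j and ‖z‖ := max_j |z_j| ≥ 1, one has |ψ(z)| ≤ (3A/σ) ‖z‖^γ. -/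
open MeasureTheory

lemma aux_exp_lower (x : ℝ) (hx : 0 ≤ x) :
    (1 - Real.exp (-1)) * min 1 x ≤ 1 - Real.exp (-x) := by
  rcases le_total x 1 with h | h
  · rw [min_eq_right h]
    have hconv := convexOn_exp.2 (Set.mem_univ (-1 : ℝ)) (Set.mem_univ (0 : ℝ))
      hx (by linarith : (0:ℝ) ≤ 1 - x) (by ring)
    simp only [smul_eq_mul, mul_zero, add_zero, mul_neg, mul_one, Real.exp_zero] at hconv
    nlinarith [hconv]
  · rw [min_eq_left h]
    have : Real.exp (-x) ≤ Real.exp (-1) := Real.exp_le_exp.mpr (by linarith)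
    linarith

lemma aux_min_mul (c s : ℝ) (hc : 1 ≤ c) (hs : 0 ≤ s) : min 1 (c * s) ≤ c * min 1 s := by
  rcases le_total s 1 with h | h
  · rw [min_eq_right h]; exact min_le_right _ _
  · rw [min_eq_left h]
    have h1 : (1:ℝ) ≤ c * s := by nlinarith
    rw [min_eq_left h1, mul_one]; linarith

lemma aux_abs_exp (w : ℂ) (hw : w.re ≤ 0) :
    ‖Complex.exp w - 1‖ ≤ 2 * min 1 ‖w‖ := by
  rcases le_total ‖w‖ 1 with h | h
  · rw [min_eq_right h]; exact Complex.norm_exp_sub_one_le h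
  · rw [min_eq_left h, mul_one]
    calc ‖Complex.exp w - 1‖
        ≤ ‖Complex.exp w‖ + ‖(1:ℂ)‖ := by
          exact norm_sub_le _ _
      _ ≤ 2 := by
          rw [Complex.norm_exp, norm_one]
          have : Real.exp w.re ≤ 1 := Real.exp_le_one_iff.mpr hw
          linarith

/-- Let `μ` be a positive measure on `ℝ₊ⁿ∖{0}` with
`∫ min(1, Σ_j u_j) dμ(u) < ∞` and `ψ(z) = ∫ (e^{z·u} − 1) dμ(u)` for `Re z_j ≤ 0`.
If there are `A > 0` and `γ ∈ (0,1)` with `−ψ(−c,…,−c) ≤ A c^γ` for every real `c ≥ 1`,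
then with `σ = 1 − e^{−1}` we have `|ψ(z)| ≤ (3A/σ) ‖z‖^γ` for every `z` with
`Re z_j ≤ 0` and `‖z‖ = max_j |z_j| ≥ 1` (the sup-norm on `ℂⁿ`). -/
theorem abs_psi_le_of_diagonal_growth
    (n : ℕ) (hn : 1 ≤ n) (μ : Measure (Fin n → ℝ))
    (hμsupp : μ {u | ¬(u ∈ posOrthant n ∧ u ≠ 0)} = 0)
    (hμint : ∫⁻ u, ENNReal.ofReal (min 1 (∑ j, u j)) ∂μ < ⊤)
    (A γ : ℝ) (hA : 0 < A) (hγ : γ ∈ Set.Ioo (0 : ℝ) 1)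
    (hdiag : ∀ c : ℝ, 1 ≤ c →
      -(∫ u, (Complex.exp (∑ j, (-c : ℂ) * (u j : ℂ)) - 1) ∂μ).re ≤ A * c ^ γ)
    (z : Fin n → ℂ) (hz : ∀ j, (z j).re ≤ 0) (hznorm : 1 ≤ ‖z‖) :
    ‖∫ u, (Complex.exp (∑ j, z j * (u j : ℂ)) - 1) ∂μ‖
      ≤ 3 * A / (1 - Real.exp (-1)) * ‖z‖ ^ γ := by
  set c := ‖z‖ with hcdef
  have hc1 : (1:ℝ) ≤ c := hznorm
  have hc0 : (0:ℝ) < c := by linarith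
  set σ := 1 - Real.exp (-1) with hσdef
  have hσ0 : (0:ℝ) < σ := by
    have : Real.exp (-1) < 1 := Real.exp_lt_one_iff.mpr (by norm_num)
    simp only [hσdef]; linarith
  have hE : ∀ᵐ u ∂μ, u ∈ posOrthant n ∧ u ≠ 0 := by
    rw [MeasureTheory.ae_iff]; exact hμsupp
  -- a.e. bound and integrability for a general `w` dominated by `c`
  have hInt : ∀ w : Fin n → ℂ, (∀ j, (w j).re ≤ 0) → (∀ j, ‖w j‖ ≤ c) →
      (∀ᵐ u ∂μ, ‖Complex.exp (∑ j, w j * (u j : ℂ)) - 1‖ ≤ 2 * min 1 (c * ∑ j, u j))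
        ∧ Integrable (fun u => Complex.exp (∑ j, w j * (u j : ℂ)) - 1) μ := by
    intro w hwre hwabs
    have hbound : ∀ᵐ u ∂μ,
        ‖Complex.exp (∑ j, w j * (u j : ℂ)) - 1‖ ≤ 2 * min 1 (c * ∑ j, u j) := by
      filter_upwards [hE] with u hu
      have hu0 : ∀ j, 0 ≤ u j := hu.1
      have hre : (∑ j, w j * (u j : ℂ)).re ≤ 0 := by
        rw [Complex.re_sum]
        apply Finset.sum_nonpos
        intro j _
        simp only [Complex.mul_re, Complex.ofReal_re, Complex.ofReal_im, mul_zero, sub_zero]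
        exact mul_nonpos_of_nonpos_of_nonneg (hwre j) (hu0 j)
      have habs : ‖∑ j, w j * (u j : ℂ)‖ ≤ c * ∑ j, u j := by
        calc ‖∑ j, w j * (u j : ℂ)‖ ≤ ∑ j, ‖w j * (u j : ℂ)‖ := norm_sum_le _ _
          _ ≤ ∑ j, c * u j := by
              apply Finset.sum_le_sum
              intro j _
              rw [norm_mul, Complex.norm_real, Real.norm_eq_abs, abs_of_nonneg (hu0 j)]
              exact mul_le_mul_of_nonneg_right (hwabs j) (hu0 j)
          _ = c * ∑ j, u j := (Finset.mul_sum _ _ _).symm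
      calc ‖Complex.exp (∑ j, w j * (u j : ℂ)) - 1‖
          = ‖Complex.exp (∑ j, w j * (u j : ℂ)) - 1‖ := rfl
        _ ≤ 2 * min 1 ‖∑ j, w j * (u j : ℂ)‖ := aux_abs_exp _ hre
        _ ≤ 2 * min 1 (c * ∑ j, u j) := by
            have := min_le_min (le_refl (1:ℝ)) habs
            linarith
    refine ⟨hbound, ⟨Continuous.aestronglyMeasurable (by fun_prop), ?_⟩⟩
    have key : (∫⁻ u, (‖Complex.exp (∑ j, w j * (u j : ℂ)) - 1‖₊ : ENNReal) ∂μ) < ⊤ := by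
      have hb2 : ∀ᵐ u ∂μ, (‖Complex.exp (∑ j, w j * (u j : ℂ)) - 1‖₊ : ENNReal)
          ≤ ENNReal.ofReal (2 * c) * ENNReal.ofReal (min 1 (∑ j, u j)) := by
        filter_upwards [hbound, hE] with u h1 hu
        have hs : 0 ≤ ∑ j, u j := Finset.sum_nonneg fun j _ => hu.1 j
        have h2 : min 1 (c * ∑ j, u j) ≤ c * min 1 (∑ j, u j) := aux_min_mul c _ hc1 hs
        calc (‖Complex.exp (∑ j, w j * (u j : ℂ)) - 1‖₊ : ENNReal)
            = ENNReal.ofReal ‖Complex.exp (∑ j, w j * (u j : ℂ)) - 1‖ :=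
              (ofReal_norm _).symm
          _ ≤ ENNReal.ofReal ((2 * c) * min 1 (∑ j, u j)) :=
              ENNReal.ofReal_le_ofReal (by nlinarith)
          _ = ENNReal.ofReal (2 * c) * ENNReal.ofReal (min 1 (∑ j, u j)) :=
              ENNReal.ofReal_mul (by positivity)
      calc (∫⁻ u, (‖Complex.exp (∑ j, w j * (u j : ℂ)) - 1‖₊ : ENNReal) ∂μ)
          ≤ ∫⁻ u, ENNReal.ofReal (2 * c) * ENNReal.ofReal (min 1 (∑ j, u j)) ∂μ :=
            lintegral_mono_ae hb2
        _ = ENNReal.ofReal (2 * c) * ∫⁻ u, ENNReal.ofReal (min 1 (∑ j, u j)) ∂μ :=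
            lintegral_const_mul' _ _ ENNReal.ofReal_ne_top
        _ < ⊤ := ENNReal.mul_lt_top ENNReal.ofReal_lt_top hμint
    exact key
  obtain ⟨hbz, hfz⟩ := hInt z hz (fun j => by
    exact norm_le_pi_norm z j)
  obtain ⟨hbc, hfc⟩ := hInt (fun _ => (-c : ℂ)) (fun j => by simp; positivity) (fun j => by
    simp [abs_of_pos hc0])
  -- the diagonal complex integrand is real
  have hpt : ∀ u : Fin n → ℝ,
      Complex.exp (∑ j, (-c : ℂ) * (u j : ℂ)) - 1
        = ((Real.exp (-(c * ∑ j, u j)) - 1 : ℝ) : ℂ) := by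
    intro u
    rw [show (∑ j, (-c : ℂ) * (u j : ℂ)) = ((-(c * ∑ j, u j) : ℝ) : ℂ) by
      rw [← Finset.mul_sum]; push_cast; ring]
    rw [← Complex.ofReal_exp]; push_cast; ring
  have hre_pt : ∀ u : Fin n → ℝ,
      (Complex.exp (∑ j, (-c : ℂ) * (u j : ℂ)) - 1).re
        = Real.exp (-(c * ∑ j, u j)) - 1 := by
    intro u; rw [hpt u, Complex.ofReal_re]
  have hInt2 : Integrable (fun u => 2 / σ * (1 - Real.exp (-(c * ∑ j, u j)))) μ := by
    have h1 : Integrable (fun u => (Complex.exp (∑ j, (-c : ℂ) * (u j : ℂ)) - 1).re) μ :=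
      hfc.re
    have h2 := (h1.neg.const_mul (2 / σ))
    refine h2.congr (Filter.Eventually.of_forall fun u => ?_)
    simp only [Pi.neg_apply]
    rw [hre_pt u]; ring
  have hb : ∀ᵐ u ∂μ, ‖Complex.exp (∑ j, z j * (u j : ℂ)) - 1‖
      ≤ 2 / σ * (1 - Real.exp (-(c * ∑ j, u j))) := by
    filter_upwards [hbz, hE] with u h1 hu
    have hs : 0 ≤ ∑ j, u j := Finset.sum_nonneg fun j _ => hu.1 j
    have hx : 0 ≤ c * ∑ j, u j := by positivity
    calc ‖Complex.exp (∑ j, z j * (u j : ℂ)) - 1‖ ≤ 2 * min 1 (c * ∑ j, u j) := h1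
      _ = 2 / σ * (σ * min 1 (c * ∑ j, u j)) := by field_simp
      _ ≤ 2 / σ * (1 - Real.exp (-(c * ∑ j, u j))) :=
          mul_le_mul_of_nonneg_left (aux_exp_lower _ hx) (by positivity)
  calc ‖∫ u, (Complex.exp (∑ j, z j * (u j : ℂ)) - 1) ∂μ‖
      = ‖∫ u, (Complex.exp (∑ j, z j * (u j : ℂ)) - 1) ∂μ‖ := rfl
    _ ≤ ∫ u, ‖Complex.exp (∑ j, z j * (u j : ℂ)) - 1‖ ∂μ := norm_integral_le_integral_norm _
    _ ≤ ∫ u, 2 / σ * (1 - Real.exp (-(c * ∑ j, u j))) ∂μ :=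
        integral_mono_ae hfz.norm hInt2 hb
    _ = 2 / σ * ∫ u, (1 - Real.exp (-(c * ∑ j, u j))) ∂μ := integral_const_mul _ _
    _ = 2 / σ * (-(∫ u, (Complex.exp (∑ j, (-c : ℂ) * (u j : ℂ)) - 1) ∂μ).re) := by
        have hri := integral_re hfc
        simp only [RCLike.re_to_complex] at hri
        congr 1
        rw [← hri, ← MeasureTheory.integral_neg]
        refine integral_congr_ae (Filter.Eventually.of_forall fun u => ?_)
        simp only [hre_pt]; ring
    _ ≤ 2 / σ * (A * c ^ γ) :=
        mul_le_mul_of_nonneg_left (hdiag c hc1) (by positivity)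
    _ ≤ 3 * A / σ * c ^ γ := by
        have hpow : (0:ℝ) < c ^ γ := Real.rpow_pos_of_pos hc0 γ
        rw [show 2 / σ * (A * c ^ γ) = 2 * A * c ^ γ / σ from by ring,
          show 3 * A / σ * c ^ γ = 3 * A * c ^ γ / σ from by ring]
        gcongr
        nlinarith
end

section
/- Let f ∈ L¹(ℝⁿ) vanish a.e. outside ℝ₊ⁿ := [0,∞)ⁿ, let μ be a positive measure on ℝ₊ⁿ∖{0}, and suppose k(f,μ) := ∫_{ℝ₊ⁿ∖{0}} ∫_{ℝⁿ} |f(r−u) − f(r)| dr dμ(u) < ∞ and ∫ min(1, Σ_j u_j) dμ(u) < ∞. Define ψ(s) := ∫_{ℝ₊ⁿ∖{0}} (e^{s·u} − 1) dμ(u), g(s) := ∫_{ℝ₊ⁿ} e^{s·r} f(r) dr for s ∈ (−∞,0)ⁿ, and b(r) := ∫_{ℝ₊ⁿ∖{0}} (f(r−u) − f(r)) dμ(u). Then b ∈ L¹(ℝⁿ) with ‖b‖_{L¹} ≤ k(f,μ), b vanishes a.e. outside ℝ₊ⁿ, and ∫_{ℝ₊ⁿ} e^{s·r} b(r) dr =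 ψ(s) g(s) for all s ∈ (−∞,0)ⁿ. -/
/-!
Write `H(r, u) = f(r - u) - f(r)`. The hypothesis `k(f, μ) < ∞` says exactly that `H` is
integrable for `volume ⊗ μ` (`μ` is σ-finite because `min 1 (∑ u_j)` is a positive
`μ`-integrable function), so Fubini gives `b ∈ L¹` and `‖b‖₁ ≤ ‖H‖₁ = k(f, μ)`. Since `μ` lives
on `ℝ₊ⁿ` and `ℝ₊ⁿ + ℝ₊ⁿ ⊆ ℝ₊ⁿ`, `r ∉ ℝ₊ⁿ` forces `r - u ∉ ℝ₊ⁿ`, so both terms of `H(r, u)`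
vanish. For the Laplace transform, the weight `e^{s·r}` is bounded by `1` on `ℝ₊ⁿ` and
multiplicative, so after swapping the integrals each `u`-slice is a translate:
`∫_{ℝ₊ⁿ} e^{s·r} f(r - u) dr = e^{s·u} g(s)`.
-/

open MeasureTheory Measure Filter Set
open scoped ENNReal

theorem sigmaFinite_of_lintegral_lt_top {α : Type*} [MeasurableSpace α] {μ : Measure α}
    {g : α → ℝ≥0∞} (hg : AEMeasurable g μ) (hg_ne_zero : ∀ᵐ x ∂μ, g x ≠ 0)
    (hg_lt_top : ∫⁻ x, g x ∂μ < ∞) : SigmaFinite μ := by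
  have : IsFiniteMeasure (μ.withDensity g) := isFiniteMeasure_withDensity hg_lt_top.ne
  have hinv : ∀ᵐ x ∂μ.withDensity g, (g x)⁻¹ ≠ ∞ :=
    (withDensity_absolutelyContinuous μ g).ae_le
      (hg_ne_zero.mono fun _ hx => ENNReal.inv_ne_top.mpr hx)
  rw [← withDensity_inv_same₀ hg hg_ne_zero
    (ae_lt_top' hg hg_lt_top.ne |>.mono fun _ => ne_of_lt)]
  exact SigmaFinite.withDensity_of_ne_top hinv

theorem abs_indicator_le_one {α : Type*} {E : α → ℝ} {S : Set α} (hE_le : ∀ x ∈ S, |E x| ≤ 1)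
    (x : α) : |S.indicator E x| ≤ 1 := by
  by_cases hx : x ∈ S
  · simpa [indicator_of_mem hx] using hE_le x hx
  · simp [indicator_of_notMem hx]

theorem integrable_indicator_mul {α : Type*} [MeasurableSpace α] {ν : Measure α} {f E : α → ℝ}
    {S : Set α} (hf : Integrable f ν) (hS : MeasurableSet S) (hE : Measurable E)
    (hE_le : ∀ x ∈ S, |E x| ≤ 1) :
    Integrable (fun r => S.indicator E r * f r) ν :=
  hf.bdd_mul (c := 1) (hE.indicator hS).aestronglyMeasurable
    (ae_of_all _ (abs_indicator_le_one hE_le))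

section Translation

variable {G : Type*} [MeasurableSpace G] [AddGroup G] [MeasurableAdd G] {ν : Measure G}
  [IsAddRightInvariant ν] {f : G → ℝ} {S T : Set G} {E : G → ℝ}

theorem integral_indicator_mul_comp_sub (hE : ∀ x y, E (x + y) = E x * E y)
    (hST : ∀ x ∈ S, ∀ u ∈ T, x + u ∈ S) (hfS : ∀ᵐ r ∂ν, r ∉ S → f r = 0) {u : G} (hu : u ∈ T) :
    ∫ r, S.indicator E r * f (r - u) ∂ν = E u * ∫ r, S.indicator E r * f r ∂ν := by
  have hfS' : ∀ᵐ r ∂ν, r - u ∉ S → f (r - u) = 0 :=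
    (measurePreserving_sub_right ν u).quasiMeasurePreserving.ae hfS
  calc ∫ r, S.indicator E r * f (r - u) ∂ν
      = ∫ r, E u * (S.indicator E (r - u) * f (r - u)) ∂ν := by
        refine integral_congr_ae ?_
        filter_upwards [hfS'] with r hr
        by_cases h : r - u ∈ S
        · have hr : r ∈ S := by simpa using hST _ h u hu
          rw [indicator_of_mem hr, indicator_of_mem h, ← sub_add_cancel r u, hE,
            add_sub_cancel_right]
          ring
        · simp [hr h]
    _ = E u * ∫ r, S.indicator E r * f r ∂ν := by
        rw [integral_const_mul, integral_sub_right_eq_self (fun r => S.indicator E r * f r) u]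

theorem integral_indicator_mul_comp_sub_sub (hf : Integrable f ν) (hS : MeasurableSet S)
    (hEm : Measurable E) (hE_le : ∀ x ∈ S, |E x| ≤ 1) (hE : ∀ x y, E (x + y) = E x * E y)
    (hST : ∀ x ∈ S, ∀ u ∈ T, x + u ∈ S) (hfS : ∀ᵐ r ∂ν, r ∉ S → f r = 0) {u : G} (hu : u ∈ T) :
    ∫ r, S.indicator E r * (f (r - u) - f r) ∂ν
      = (E u - 1) * ∫ r, S.indicator E r * f r ∂ν := by
  simp_rw [mul_sub]
  rw [integral_sub (integrable_indicator_mul (hf.comp_sub_right u) hS hEm hE_le)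
    (integrable_indicator_mul hf hS hEm hE_le), integral_indicator_mul_comp_sub hE hST hfS hu]
  ring

end Translation

section TranslationDifference

variable {G : Type*} [MeasurableSpace G] [AddGroup G] [MeasurableAdd₂ G] [MeasurableNeg G]
  {ν μ : Measure G} [IsAddRightInvariant ν] [SFinite ν] [SFinite μ] {f : G → ℝ} {S T : Set G}
  {E : G → ℝ}

theorem aestronglyMeasurable_comp_sub_sub (hf : AEStronglyMeasurable f ν) :
    AEStronglyMeasurable (fun p : G × G => f (p.1 - p.2) - f p.1) (ν.prod μ) :=
  (hf.comp_quasiMeasurePreserving (quasiMeasurePreserving_sub_of_right_invariant ν μ)).sub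
    hf.comp_fst

theorem lintegral_prod_enorm_comp_sub_sub (hf : AEStronglyMeasurable f ν) :
    ∫⁻ p, ‖f (p.1 - p.2) - f p.1‖ₑ ∂(ν.prod μ)
      = ∫⁻ u, ∫⁻ r, ENNReal.ofReal |f (r - u) - f r| ∂ν ∂μ := by
  rw [lintegral_prod_symm _ (aestronglyMeasurable_comp_sub_sub hf).enorm]
  simp_rw [Real.enorm_eq_ofReal_abs]

theorem integrable_comp_sub_sub (hf : AEStronglyMeasurable f ν)
    (hk : ∫⁻ u, ∫⁻ r, ENNReal.ofReal |f (r - u) - f r| ∂ν ∂μ < ∞) :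
    Integrable (fun p : G × G => f (p.1 - p.2) - f p.1) (ν.prod μ) :=
  ⟨aestronglyMeasurable_comp_sub_sub hf,
    by rwa [HasFiniteIntegral, lintegral_prod_enorm_comp_sub_sub hf]⟩

theorem integral_abs_integral_comp_sub_sub_le (hf : AEStronglyMeasurable f ν)
    (hk : ∫⁻ u, ∫⁻ r, ENNReal.ofReal |f (r - u) - f r| ∂ν ∂μ < ∞) :
    ∫ r, |∫ u, (f (r - u) - f r) ∂μ| ∂ν
      ≤ (∫⁻ u, ∫⁻ r, ENNReal.ofReal |f (r - u) - f r| ∂ν ∂μ).toReal := by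
  have hH := (integrable_comp_sub_sub hf hk).abs
  calc ∫ r, |∫ u, (f (r - u) - f r) ∂μ| ∂ν
      ≤ ∫ r, ∫ u, |f (r - u) - f r| ∂μ ∂ν :=
        integral_mono_of_nonneg (ae_of_all _ fun _ => abs_nonneg _) hH.integral_prod_left
          (ae_of_all _ fun _ => abs_integral_le_integral_abs)
    _ = ∫ p, ‖f (p.1 - p.2) - f p.1‖ ∂(ν.prod μ) := (integral_prod _ hH).symm
    _ = _ := by
        rw [integral_norm_eq_lintegral_enorm (aestronglyMeasurable_comp_sub_sub hf),
          lintegral_prod_enorm_comp_sub_sub hf]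

theorem ae_integral_comp_sub_sub_eq_zero (hST : ∀ x ∈ S, ∀ u ∈ T, x + u ∈ S)
    (hfS : ∀ᵐ r ∂ν, r ∉ S → f r = 0) (hμT : ∀ᵐ u ∂μ, u ∈ T) :
    ∀ᵐ r ∂ν, r ∉ S → ∫ u, (f (r - u) - f r) ∂μ = 0 := by
  have hshift := ae_ae_of_ae_prod ((quasiMeasurePreserving_sub_of_right_invariant ν μ).ae hfS)
  filter_upwards [hshift, hfS] with r hr hfr hrS
  refine integral_eq_zero_of_ae ?_
  filter_upwards [hr, hμT] with u hu huT
  have : r - u ∉ S := fun h => hrS (by simpa using hST _ h u huT)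
  simp [hu this, hfr hrS]

theorem setIntegral_mul_integral_comp_sub_sub (hf : Integrable f ν) (hS : MeasurableSet S)
    (hEm : Measurable E) (hE_le : ∀ x ∈ S, |E x| ≤ 1) (hE : ∀ x y, E (x + y) = E x * E y)
    (hST : ∀ x ∈ S, ∀ u ∈ T, x + u ∈ S) (hfS : ∀ᵐ r ∂ν, r ∉ S → f r = 0)
    (hμT : ∀ᵐ u ∂μ, u ∈ T) (hk : ∫⁻ u, ∫⁻ r, ENNReal.ofReal |f (r - u) - f r| ∂ν ∂μ < ∞) :
    ∫ r in S, E r * ∫ u, (f (r - u) - f r) ∂μ ∂ν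
      = (∫ u, (E u - 1) ∂μ) * ∫ r in S, E r * f r ∂ν := by
  have hw : Integrable (fun p : G × G => S.indicator E p.1 * (f (p.1 - p.2) - f p.1))
      (ν.prod μ) :=
    (integrable_comp_sub_sub hf.aestronglyMeasurable hk).bdd_mul (c := 1)
      ((hEm.indicator hS).comp measurable_fst).aestronglyMeasurable
      (ae_of_all _ fun p => abs_indicator_le_one hE_le p.1)
  calc ∫ r in S, E r * ∫ u, (f (r - u) - f r) ∂μ ∂ν
      = ∫ r, ∫ u, S.indicator E r * (f (r - u) - f r) ∂μ ∂ν := by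
        simp_rw [← integral_indicator hS, integral_const_mul, indicator_mul_left]
    _ = ∫ u, ∫ r, S.indicator E r * (f (r - u) - f r) ∂ν ∂μ := integral_integral_swap hw
    _ = ∫ u, (E u - 1) * ∫ r, S.indicator E r * f r ∂ν ∂μ :=
        integral_congr_ae (hμT.mono fun u hu =>
          integral_indicator_mul_comp_sub_sub hf hS hEm hE_le hE hST hfS hu)
    _ = (∫ u, (E u - 1) ∂μ) * ∫ r in S, E r * f r ∂ν := by
        simp_rw [integral_mul_const, ← integral_indicator hS, indicator_mul_left]

end TranslationDifference

theorem measurableSet_posOrthant (n : ℕ) : MeasurableSet (posOrthant n) := by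
  unfold posOrthant
  measurability

theorem add_mem_posOrthant {n : ℕ} {x u : Fin n → ℝ} (hx : x ∈ posOrthant n)
    (hu : u ∈ posOrthant n) : x + u ∈ posOrthant n :=
  fun j => add_nonneg (hx j) (hu j)

theorem sum_pos_of_mem_posOrthant {n : ℕ} {u : Fin n → ℝ} (hu : u ∈ posOrthant n)
    (hu0 : u ≠ 0) : 0 < ∑ j, u j := by
  obtain ⟨j, hj⟩ := Function.ne_iff.mp hu0
  exact Finset.sum_pos' (fun j _ => hu j) ⟨j, Finset.mem_univ j, (hu j).lt_of_ne' hj⟩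

theorem abs_exp_sum_mul_le_one {n : ℕ} {s r : Fin n → ℝ} (hs : ∀ j, s j ≤ 0)
    (hr : r ∈ posOrthant n) : |Real.exp (∑ j, s j * r j)| ≤ 1 := by
  rw [Real.abs_exp, Real.exp_le_one_iff]
  exact Finset.sum_nonpos fun j _ => mul_nonpos_of_nonpos_of_nonneg (hs j) (hr j)

/-- Let `f ∈ L¹(ℝⁿ)` vanish a.e. outside `ℝ₊ⁿ`, let `μ` be a positive
measure on `ℝ₊ⁿ∖{0}` with `k(f,μ) := ∫∫ |f(r−u) − f(r)| dr dμ(u) < ∞` and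
`∫ min(1, Σ_j u_j) dμ(u) < ∞`. With `ψ(s) = ∫ (e^{s·u} − 1) dμ(u)`,
`g(s) = ∫_{ℝ₊ⁿ} e^{s·r} f(r) dr` and `b(r) = ∫ (f(r−u) − f(r)) dμ(u)`, one has
`b ∈ L¹(ℝⁿ)`, `‖b‖_{L¹} ≤ k(f,μ)`, `b` vanishes a.e. outside `ℝ₊ⁿ`, and
`∫_{ℝ₊ⁿ} e^{s·r} b(r) dr = ψ(s) g(s)` for all `s ∈ (−∞,0)ⁿ`. -/
theorem laplace_of_levy_type_convolution
    (n : ℕ) (f : (Fin n → ℝ) → ℝ)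
    (hf : Integrable f (volume : Measure (Fin n → ℝ)))
    (hfsupp : ∀ᵐ r ∂(volume : Measure (Fin n → ℝ)), r ∉ posOrthant n → f r = 0)
    (μ : Measure (Fin n → ℝ))
    (hμsupp : μ {u | ¬(u ∈ posOrthant n ∧ u ≠ 0)} = 0)
    (hμint : ∫⁻ u, ENNReal.ofReal (min 1 (∑ j, u j)) ∂μ < ⊤)
    (hk : ∫⁻ u, (∫⁻ r, ENNReal.ofReal |f (r - u) - f r| ∂volume) ∂μ < ⊤) :
    Integrable (fun r => ∫ u, (f (r - u) - f r) ∂μ) (volume : Measure (Fin n → ℝ))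
    ∧ ∫ r, |∫ u, (f (r - u) - f r) ∂μ| ∂(volume : Measure (Fin n → ℝ))
        ≤ (∫⁻ u, (∫⁻ r, ENNReal.ofReal |f (r - u) - f r| ∂volume) ∂μ).toReal
    ∧ (∀ᵐ r ∂(volume : Measure (Fin n → ℝ)),
        r ∉ posOrthant n → (∫ u, (f (r - u) - f r) ∂μ) = 0)
    ∧ ∀ s : Fin n → ℝ, (∀ j, s j < 0) →
        ∫ r in posOrthant n, Real.exp (∑ j, s j * r j) * (∫ u, (f (r - u) - f r) ∂μ)
          = (∫ u, (Real.exp (∑ j, s j * u j) - 1) ∂μ)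
              * ∫ r in posOrthant n, Real.exp (∑ j, s j * r j) * f r := by
  have hμpos : ∀ᵐ u ∂μ, u ∈ posOrthant n ∧ u ≠ 0 :=
    measure_eq_zero_iff_ae_notMem.mp hμsupp |>.mono fun _ => not_not.mp
  have hμP : ∀ᵐ u ∂μ, u ∈ posOrthant n := hμpos.mono fun _ => And.left
  have : SigmaFinite μ := sigmaFinite_of_lintegral_lt_top (by fun_prop)
    (hμpos.mono fun u hu => (ENNReal.ofReal_pos.mpr
      (lt_min one_pos (sum_pos_of_mem_posOrthant hu.1 hu.2))).ne') hμint
  have hP_add : ∀ x ∈ posOrthant n, ∀ u ∈ posOrthant n, x + u ∈ posOrthant n :=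
    fun _ hx _ hu => add_mem_posOrthant hx hu
  refine ⟨(integrable_comp_sub_sub hf.aestronglyMeasurable hk).integral_prod_left,
    integral_abs_integral_comp_sub_sub_le hf.aestronglyMeasurable hk,
    ae_integral_comp_sub_sub_eq_zero hP_add hfsupp hμP, fun s hs => ?_⟩
  refine setIntegral_mul_integral_comp_sub_sub hf (measurableSet_posOrthant n) (by fun_prop)
    (fun r hr => abs_exp_sum_mul_le_one (fun j => (hs j).le) hr) (fun x y => ?_)
    hP_add hfsupp hμP hk
  simp only [Pi.add_apply, mul_add, Finset.sum_add_distrib, Real.exp_add]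
end

section
/- Let p : (0,∞) → [0,∞) be measurable with ω := ∫_0^∞ v p(v) dv < ∞, and define ψ₁(s) := ∫_0^∞ (e^{sv} − 1) p(v) dv for s < 0. Then for all s₁, s₂ < 0 with s₁ ≠ s₂, the integral ∫_{(0,∞)²} (e^{s₁u₁ + s₂u₂} − 1) p(u₁ + u₂) du₁ du₂ converges absolutely and equals (ψ₁(s₁) − ψ₁(s₂))/(s₁ − s₂) − ω. -/
open MeasureTheory

lemma shear_mp : MeasurePreserving (fun z : ℝ × ℝ => (z.1, z.1 + z.2)) volume volume := by
  rw [show (volume : Measure (ℝ × ℝ)) = (volume : Measure ℝ).prod volume from rfl]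
  exact (MeasurePreserving.id volume).skew_product (measurable_fst.add measurable_snd)
    (Filter.Eventually.of_forall fun a => (measurePreserving_add_left volume a).map_eq)

lemma exp_int (c d a b : ℝ) (hc : c ≠ 0) :
    ∫ x in a..b, Real.exp (c * x + d) = (Real.exp (c * b + d) - Real.exp (c * a + d)) / c := by
  have : ∀ x : ℝ, HasDerivAt (fun x => Real.exp (c * x + d) / c) (Real.exp (c * x + d)) x := by
    intro x
    have h1 : HasDerivAt (fun x : ℝ => c * x + d) c x := by
      simpa using ((hasDerivAt_id x).const_mul c).add_const d
    have := (h1.exp).div_const c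
    simpa [mul_div_assoc, mul_comm, mul_div_cancel_left₀ _ hc] using this
  rw [intervalIntegral.integral_eq_sub_of_hasDerivAt (fun x _ => this x)
    ((Real.continuous_exp.comp (by continuity)).intervalIntegrable a b)]
  ring


/-- Let `p : (0,∞) → [0,∞)` be measurable with
`ω = ∫_0^∞ v p(v) dv < ∞` and `ψ₁(s) = ∫_0^∞ (e^{sv} − 1) p(v) dv` for `s < 0`. Then for
`s₁, s₂ < 0`, `s₁ ≠ s₂`, the integral `∫_{(0,∞)²} (e^{s₁u₁+s₂u₂} − 1) p(u₁+u₂) du₁ du₂`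
converges absolutely and equals `(ψ₁(s₁) − ψ₁(s₂))/(s₁ − s₂) − ω`. -/
theorem two_variable_bernstein_of_divided_difference
    (p : ℝ → ℝ) (hp : Measurable p) (hp0 : ∀ v, 0 < v → 0 ≤ p v)
    (hω : IntegrableOn (fun v => v * p v) (Set.Ioi 0) volume)
    (s₁ s₂ : ℝ) (hs₁ : s₁ < 0) (hs₂ : s₂ < 0) (hne : s₁ ≠ s₂) :
    IntegrableOn (fun q : ℝ × ℝ => (Real.exp (s₁ * q.1 + s₂ * q.2) - 1) * p (q.1 + q.2))
        (Set.Ioi 0 ×ˢ Set.Ioi 0) volume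
    ∧ ∫ q in Set.Ioi (0:ℝ) ×ˢ Set.Ioi (0:ℝ),
          (Real.exp (s₁ * q.1 + s₂ * q.2) - 1) * p (q.1 + q.2)
        = ((∫ v in Set.Ioi (0:ℝ), (Real.exp (s₁ * v) - 1) * p v)
            - ∫ v in Set.Ioi (0:ℝ), (Real.exp (s₂ * v) - 1) * p v) / (s₁ - s₂)
          - ∫ v in Set.Ioi (0:ℝ), v * p v := by
  have hc : s₁ - s₂ ≠ 0 := sub_ne_zero.mpr hne
  have hS : MeasurableSet (Set.Ioi (0:ℝ) ×ˢ Set.Ioi (0:ℝ)) :=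
    measurableSet_Ioi.prod measurableSet_Ioi
  have hA : MeasurableSet {w : ℝ × ℝ | 0 < w.1 ∧ w.1 < w.2} :=
    (measurableSet_lt measurable_const measurable_fst).inter
      (measurableSet_lt measurable_fst measurable_snd)
  set G : ℝ × ℝ → ℝ := fun z => (Real.exp (s₁ * z.1 + s₂ * z.2) - 1) * p (z.1 + z.2) with hGdef
  set K : ℝ × ℝ → ℝ :=
    Set.indicator {w : ℝ × ℝ | 0 < w.1 ∧ w.1 < w.2}
      (fun w => (Real.exp (s₁ * w.1 + s₂ * (w.2 - w.1)) - 1) * p w.2) with hKdef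
  have hKm : Measurable K := by
    apply Measurable.indicator _ hA
    exact ((Real.measurable_exp.comp
      ((measurable_fst.const_mul s₁).add ((measurable_snd.sub measurable_fst).const_mul s₂))).sub
        measurable_const).mul (hp.comp measurable_snd)
  -- K ∘ T = indicator S G
  have hKT : ∀ z : ℝ × ℝ, K (z.1, z.1 + z.2) = (Set.Ioi (0:ℝ) ×ˢ Set.Ioi (0:ℝ)).indicator G z := by
    intro z
    by_cases h : z ∈ Set.Ioi (0:ℝ) ×ˢ Set.Ioi (0:ℝ)
    · have hz1 : (0:ℝ) < z.1 := h.1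
      have hz2 : (0:ℝ) < z.2 := h.2
      have hmem : ((z.1, z.1 + z.2) : ℝ × ℝ) ∈ {w : ℝ × ℝ | 0 < w.1 ∧ w.1 < w.2} :=
        ⟨hz1, by simp; linarith⟩
      rw [hKdef, Set.indicator_of_mem hmem, Set.indicator_of_mem h]
      simp only [hGdef]
      norm_num
    · have hmem : ((z.1, z.1 + z.2) : ℝ × ℝ) ∉ {w : ℝ × ℝ | 0 < w.1 ∧ w.1 < w.2} := by
        intro hm
        have h2 : z.1 < z.1 + z.2 := hm.2
        exact h ⟨Set.mem_Ioi.mpr hm.1, Set.mem_Ioi.mpr (by linarith)⟩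
      rw [hKdef, Set.indicator_of_notMem hmem, Set.indicator_of_notMem h]
  -- bound function B
  set B : ℝ × ℝ → ℝ :=
    Set.indicator {w : ℝ × ℝ | 0 < w.1 ∧ w.1 < w.2} (fun w => p w.2) with hBdef
  have hBm : Measurable B := (hp.comp measurable_snd).indicator hA
  have hB0 : ∀ w, 0 ≤ B w := by
    intro w
    by_cases hw : w ∈ {w : ℝ × ℝ | 0 < w.1 ∧ w.1 < w.2}
    · rw [hBdef, Set.indicator_of_mem hw]; exact hp0 _ (lt_trans hw.1 hw.2)
    · rw [hBdef, Set.indicator_of_notMem hw]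
  have hBfin : HasFiniteIntegral B volume := by
    rw [hasFiniteIntegral_iff_norm]
    have heq : ∀ w : ℝ × ℝ, ENNReal.ofReal ‖B w‖ = ENNReal.ofReal (B w) := fun w => by
      rw [Real.norm_eq_abs, abs_of_nonneg (hB0 w)]
    simp_rw [heq]
    rw [show (volume : Measure (ℝ × ℝ)) = (volume : Measure ℝ).prod volume from rfl,
      lintegral_prod_symm (fun z => ENNReal.ofReal (B z)) hBm.ennreal_ofReal.aemeasurable]
    have hinner : ∀ u : ℝ,
        (∫⁻ x, ENNReal.ofReal (B (x, u))) =
          (Set.Ioi (0:ℝ)).indicator (fun u => ENNReal.ofReal (u * p u)) u := by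
      intro u
      have hx : ∀ x : ℝ, ENNReal.ofReal (B (x, u)) =
          (Set.Ioo (0:ℝ) u).indicator (fun _ => ENNReal.ofReal (p u)) x := by
        intro x
        by_cases hx' : x ∈ Set.Ioo (0:ℝ) u
        · rw [Set.indicator_of_mem hx', hBdef, Set.indicator_of_mem (Set.mem_setOf.mpr
            ⟨hx'.1, hx'.2⟩)]
        · rw [Set.indicator_of_notMem hx', hBdef,
            Set.indicator_of_notMem (fun hm => hx' ⟨hm.1, hm.2⟩)]
          simp
      simp_rw [hx]
      rw [lintegral_indicator measurableSet_Ioo _, lintegral_const,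
        Measure.restrict_apply MeasurableSet.univ, Set.univ_inter, Real.volume_Ioo]
      by_cases hu : (0:ℝ) < u
      · rw [Set.indicator_of_mem (Set.mem_Ioi.mpr hu), ENNReal.ofReal_mul (le_of_lt hu), sub_zero, mul_comm]
      · rw [Set.indicator_of_notMem (show u ∉ Set.Ioi (0:ℝ) from hu)]
        have : u - 0 ≤ 0 := by simpa using le_of_not_gt hu
        rw [ENNReal.ofReal_eq_zero.mpr this, mul_zero]
    simp_rw [hinner]
    rw [lintegral_indicator measurableSet_Ioi _]
    have hfin := hω.2
    rw [hasFiniteIntegral_iff_norm] at hfin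
    refine lt_of_le_of_lt (lintegral_mono_ae ?_) hfin
    filter_upwards [ae_restrict_mem measurableSet_Ioi] with u hu
    rw [Real.norm_eq_abs, abs_of_nonneg (mul_nonneg (le_of_lt hu) (hp0 u hu))]
  have hBint : Integrable B volume := ⟨hBm.aestronglyMeasurable, hBfin⟩
  have hKbd : ∀ w, ‖K w‖ ≤ ‖B w‖ := by
    intro w
    by_cases hw : w ∈ {w : ℝ × ℝ | 0 < w.1 ∧ w.1 < w.2}
    · rw [hKdef, hBdef, Set.indicator_of_mem hw, Set.indicator_of_mem hw]
      have hp2 : 0 ≤ p w.2 := hp0 _ (lt_trans hw.1 hw.2)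
      rw [Real.norm_eq_abs, Real.norm_eq_abs, abs_of_nonneg hp2, abs_mul, abs_of_nonneg hp2]
      have ht : s₁ * w.1 + s₂ * (w.2 - w.1) ≤ 0 := by
        have h1 : s₁ * w.1 ≤ 0 := mul_nonpos_of_nonpos_of_nonneg (le_of_lt hs₁) (le_of_lt hw.1)
        have h2 : s₂ * (w.2 - w.1) ≤ 0 :=
          mul_nonpos_of_nonpos_of_nonneg (le_of_lt hs₂) (by have := hw.2; linarith)
        linarith
      have he : Real.exp (s₁ * w.1 + s₂ * (w.2 - w.1)) ≤ 1 := Real.exp_le_one_iff.mpr ht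
      have he' : 0 < Real.exp (s₁ * w.1 + s₂ * (w.2 - w.1)) := Real.exp_pos _
      have habs : |Real.exp (s₁ * w.1 + s₂ * (w.2 - w.1)) - 1| ≤ 1 :=
        abs_le.mpr ⟨by linarith, by linarith⟩
      calc |Real.exp (s₁ * w.1 + s₂ * (w.2 - w.1)) - 1| * p w.2
          ≤ 1 * p w.2 := mul_le_mul_of_nonneg_right habs hp2
        _ = p w.2 := one_mul _
    · rw [hKdef, hBdef, Set.indicator_of_notMem hw, Set.indicator_of_notMem hw]
  have hKint : Integrable K volume :=
    hBint.mono hKm.aestronglyMeasurable (Filter.Eventually.of_forall hKbd)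
  -- transfer through the shear
  have hKTint : Integrable (K ∘ fun z : ℝ × ℝ => (z.1, z.1 + z.2)) volume :=
    (shear_mp.integrable_comp hKm.aestronglyMeasurable).mpr hKint
  have hGind : (Set.Ioi (0:ℝ) ×ˢ Set.Ioi (0:ℝ)).indicator G
      = K ∘ fun z : ℝ × ℝ => (z.1, z.1 + z.2) := by
    funext z; exact (hKT z).symm
  have hGint : IntegrableOn G (Set.Ioi (0:ℝ) ×ˢ Set.Ioi (0:ℝ)) volume := by
    rw [← integrable_indicator_iff hS, hGind]; exact hKTint
  refine ⟨hGint, ?_⟩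
  have hstep1 : ∫ q in Set.Ioi (0:ℝ) ×ˢ Set.Ioi (0:ℝ), G q = ∫ w, K w := by
    rw [← integral_indicator hS, hGind]
    calc ∫ z, (K ∘ fun z : ℝ × ℝ => (z.1, z.1 + z.2)) z
        = ∫ w, K w ∂(Measure.map (fun z : ℝ × ℝ => (z.1, z.1 + z.2)) volume) :=
          (integral_map shear_mp.aemeasurable
            (by rw [shear_mp.map_eq]; exact hKm.aestronglyMeasurable)).symm
      _ = ∫ w, K w := by rw [shear_mp.map_eq]
  -- Fubini
  have hstep2 : ∫ w, K w = ∫ u, (∫ x, K (x, u)) := by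
    rw [show (volume : Measure (ℝ × ℝ)) = (volume : Measure ℝ).prod volume from rfl] at hKint ⊢
    exact integral_prod_symm K hKint
  -- inner integral
  have hinner : ∀ u : ℝ, (∫ x, K (x, u)) =
      (Set.Ioi (0:ℝ)).indicator
        (fun u => ((Real.exp (s₁ * u) - Real.exp (s₂ * u)) / (s₁ - s₂) - u) * p u) u := by
    intro u
    have hx : ∀ x : ℝ, K (x, u) =
        (Set.Ioo (0:ℝ) u).indicator
          (fun x => (Real.exp (s₁ * x + s₂ * (u - x)) - 1) * p u) x := by
      intro x
      by_cases hx' : x ∈ Set.Ioo (0:ℝ) u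
      · rw [Set.indicator_of_mem hx', hKdef,
          Set.indicator_of_mem (Set.mem_setOf.mpr ⟨hx'.1, hx'.2⟩)]
      · rw [Set.indicator_of_notMem hx', hKdef,
          Set.indicator_of_notMem (fun hm => hx' ⟨hm.1, hm.2⟩)]
    simp_rw [hx]
    rw [integral_indicator measurableSet_Ioo]
    by_cases hu : (0:ℝ) < u
    · rw [Set.indicator_of_mem (Set.mem_Ioi.mpr hu)]
      have h1 : ∫ x in Set.Ioo (0:ℝ) u, (Real.exp (s₁ * x + s₂ * (u - x)) - 1) * p u
          = (∫ x in (0:ℝ)..u, (Real.exp ((s₁ - s₂) * x + s₂ * u) - 1)) * p u := by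
        rw [intervalIntegral.integral_of_le (le_of_lt hu), integral_Ioc_eq_integral_Ioo,
          ← integral_mul_const]
        apply setIntegral_congr_fun measurableSet_Ioo
        intro x _
        have hxe : s₁ * x + s₂ * (u - x) = (s₁ - s₂) * x + s₂ * u := by ring
        dsimp only
        rw [hxe]
      rw [h1]
      have h2 : ∫ x in (0:ℝ)..u, (Real.exp ((s₁ - s₂) * x + s₂ * u) - 1)
          = (Real.exp (s₁ * u) - Real.exp (s₂ * u)) / (s₁ - s₂) - u := by
        rw [intervalIntegral.integral_sub
          (Continuous.intervalIntegrable (by fun_prop :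
            Continuous fun x : ℝ => Real.exp ((s₁ - s₂) * x + s₂ * u)) 0 u)
          intervalIntegrable_const]
        rw [exp_int _ _ _ _ hc]
        have e1 : (s₁ - s₂) * u + s₂ * u = s₁ * u := by ring
        have e2 : (s₁ - s₂) * 0 + s₂ * u = s₂ * u := by ring
        rw [e1, e2, intervalIntegral.integral_const]
        simp
      rw [h2]
    · rw [Set.indicator_of_notMem (show u ∉ Set.Ioi (0:ℝ) from hu)]
      have hem : Set.Ioo (0:ℝ) u = ∅ := Set.Ioo_eq_empty hu
      rw [hem]
      simp
  simp_rw [hstep1, hstep2, hinner]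
  rw [integral_indicator measurableSet_Ioi]
  -- integrability of the two ψ-pieces
  have hI : ∀ s : ℝ, s < 0 →
      IntegrableOn (fun v => (Real.exp (s * v) - 1) * p v) (Set.Ioi 0) volume := by
    intro s hs
    have hm : AEStronglyMeasurable (fun v => (Real.exp (s * v) - 1) * p v)
        (volume.restrict (Set.Ioi (0:ℝ))) :=
      (((Real.measurable_exp.comp (measurable_id.const_mul s)).sub measurable_const).mul
        hp).aestronglyMeasurable
    refine Integrable.mono (hω.const_mul (-s)) hm ?_
    filter_upwards [ae_restrict_mem measurableSet_Ioi] with v hv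
    have hv0 : (0:ℝ) < v := hv
    have hpv : 0 ≤ p v := hp0 v hv0
    have hle : Real.exp (s * v) ≤ 1 := Real.exp_le_one_iff.mpr
      (mul_nonpos_of_nonpos_of_nonneg (le_of_lt hs) (le_of_lt hv0))
    have hge : s * v + 1 ≤ Real.exp (s * v) := Real.add_one_le_exp _
    rw [Real.norm_eq_abs, Real.norm_eq_abs, abs_mul, abs_of_nonneg hpv]
    have habs : |Real.exp (s * v) - 1| ≤ -s * v := by
      rw [abs_le]
      constructor
      · linarith
      · nlinarith [Real.exp_pos (s * v)]
    calc |Real.exp (s * v) - 1| * p v ≤ (-s * v) * p v :=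
          mul_le_mul_of_nonneg_right habs hpv
      _ ≤ |(-s) * (v * p v)| := by rw [abs_of_nonneg (by nlinarith)]; ring_nf; exact le_rfl
  have hI1 := hI s₁ hs₁
  have hI2 := hI s₂ hs₂
  have hcongr : ∀ v ∈ Set.Ioi (0:ℝ),
      ((Real.exp (s₁ * v) - Real.exp (s₂ * v)) / (s₁ - s₂) - v) * p v
        = ((Real.exp (s₁ * v) - 1) * p v - (Real.exp (s₂ * v) - 1) * p v) / (s₁ - s₂)
            - v * p v := by
    intro v _
    field_simp
    ring
  rw [setIntegral_congr_fun measurableSet_Ioi hcongr]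
  have hsub : Integrable
      (fun v => ((Real.exp (s₁ * v) - 1) * p v - (Real.exp (s₂ * v) - 1) * p v) / (s₁ - s₂))
      (volume.restrict (Set.Ioi (0:ℝ))) := (hI1.sub hI2).div_const (s₁ - s₂)
  rw [integral_sub hsub hω, integral_div, integral_sub hI1 hI2]
end

section
/- Let μ be a positive measure on ℝ₊ⁿ∖{0} with ∫ min(1, Σ_j u_j) dμ(u) < ∞, let c₀ ∈ ℝ and c₁ ∈ ℝ₊ⁿ. Then the function ψ(z) := c₀ + c₁·z + ∫_{ℝ₊ⁿ∖{0}} (e^{z·u} − 1) dμ(u) is well defined for all z ∈ ℂⁿ with Re z_j ≤ 0 for all j; it is holomorphic on the open domain {z ∈ ℂⁿ : Re z_j < 0 for all j} and continuous on its closure {z ∈ ℂⁿ : Re z_j ≤ 0 for all j}. -/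
open MeasureTheory

/-!
For `Re z ≤ 0` and `u ≥ 0` one has `|e^{z·u} - 1| ≤ 2 max(1, ‖z‖) min(1, Σ u_j)`, so the integrand
is dominated, locally uniformly in `z`, by a multiple of the `μ`-integrable function
`min(1, Σ u_j)`; dominated convergence then gives integrability and continuity on the closed
domain. If `Re z_j ≤ -δ` for all `j`, the `z`-derivative `e^{z·u} u` has norm at most
`s e^{-δ s} ≤ max(1, δ⁻¹) min(1, s)` with `s = Σ u_j`, so one may differentiate under the integral
sign, which gives holomorphy on the open domain.
-/

open Filter Topology

theorem Complex.norm_exp_sub_one_le_two_mul_min {w : ℂ} (hw : w.re ≤ 0) :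
    ‖exp w - 1‖ ≤ 2 * min 1 ‖w‖ := by
  rcases le_or_gt ‖w‖ 1 with h | h
  · rw [min_eq_right h]
    exact norm_exp_sub_one_le h
  · rw [min_eq_left h.le]
    calc ‖exp w - 1‖ ≤ ‖exp w‖ + ‖(1 : ℂ)‖ := norm_sub_le _ _
      _ ≤ 2 * 1 := by rw [norm_exp, norm_one]; linarith [Real.exp_le_one_iff.2 hw]

theorem min_one_mul_le {M s : ℝ} (hs : 0 ≤ s) : min 1 (M * s) ≤ max 1 M * min 1 s := by
  rcases le_or_gt 1 s with h | h
  · rw [min_eq_left h, mul_one]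
    exact (min_le_left _ _).trans (le_max_left _ _)
  · rw [min_eq_right h.le]
    exact (min_le_right _ _).trans (mul_le_mul_of_nonneg_right (le_max_right _ _) hs)

theorem mul_exp_neg_mul_le {δ s : ℝ} (hδ : 0 < δ) (hs : 0 ≤ s) :
    s * Real.exp (-(δ * s)) ≤ max 1 δ⁻¹ * min 1 s := by
  rcases le_or_gt s 1 with h | h
  · rw [min_eq_right h]
    have : Real.exp (-(δ * s)) ≤ 1 := Real.exp_le_one_iff.2 (by nlinarith)
    nlinarith [le_max_left 1 δ⁻¹]
  · rw [min_eq_left h.le, mul_one]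
    have hexp : δ * s ≤ Real.exp (δ * s) := (Real.add_one_le_exp _).trans' (by linarith)
    calc s * Real.exp (-(δ * s)) ≤ s * (δ * s)⁻¹ := by
          rw [Real.exp_neg]
          exact mul_le_mul_of_nonneg_left (inv_anti₀ (by positivity) hexp) hs
      _ = δ⁻¹ := by field_simp
      _ ≤ max 1 δ⁻¹ := le_max_right _ _

section WeightedSum

variable {ι : Type*} [Fintype ι]

theorem re_sum_mul_ofReal_le {z : ι → ℂ} {u : ι → ℝ} {a : ℝ} (hz : ∀ j, (z j).re ≤ a)
    (hu : ∀ j, 0 ≤ u j) : (∑ j, z j * u j).re ≤ a * ∑ j, u j := by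
  rw [Complex.re_sum, Finset.mul_sum]
  refine Finset.sum_le_sum fun j _ => ?_
  rw [Complex.re_mul_ofReal]
  exact mul_le_mul_of_nonneg_right (hz j) (hu j)

theorem norm_sum_mul_ofReal_le (z : ι → ℂ) {u : ι → ℝ} (hu : ∀ j, 0 ≤ u j) :
    ‖∑ j, z j * u j‖ ≤ ‖z‖ * ∑ j, u j := by
  rw [Finset.mul_sum]
  refine (norm_sum_le _ _).trans (Finset.sum_le_sum fun j _ => ?_)
  rw [norm_mul, Complex.norm_real, Real.norm_of_nonneg (hu j)]
  exact mul_le_mul_of_nonneg_right (norm_le_pi_norm z j) (hu j)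

theorem norm_exp_sum_mul_ofReal_sub_one_le {z : ι → ℂ} {u : ι → ℝ} (hz : ∀ j, (z j).re ≤ 0)
    (hu : ∀ j, 0 ≤ u j) :
    ‖Complex.exp (∑ j, z j * u j) - 1‖ ≤ 2 * max 1 ‖z‖ * min 1 (∑ j, u j) := by
  have hre : (∑ j, z j * u j).re ≤ 0 := by simpa using re_sum_mul_ofReal_le hz hu
  calc ‖Complex.exp (∑ j, z j * u j) - 1‖ ≤ 2 * min 1 ‖∑ j, z j * u j‖ :=
        Complex.norm_exp_sub_one_le_two_mul_min hre
    _ ≤ 2 * min 1 (‖z‖ * ∑ j, u j) := by gcongr; exact norm_sum_mul_ofReal_le z hu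
    _ ≤ 2 * (max 1 ‖z‖ * min 1 (∑ j, u j)) := by
        gcongr; exact min_one_mul_le (Finset.sum_nonneg fun j _ => hu j)
    _ = 2 * max 1 ‖z‖ * min 1 (∑ j, u j) := (mul_assoc _ _ _).symm

noncomputable def dotCLM (u : ι → ℝ) : (ι → ℂ) →L[ℂ] ℂ :=
  ∑ j, (u j : ℂ) • ContinuousLinearMap.proj j

@[simp]
theorem dotCLM_apply (u : ι → ℝ) (z : ι → ℂ) : dotCLM u z = ∑ j, z j * u j := by
  simp [dotCLM, mul_comm]

theorem continuous_dotCLM : Continuous (dotCLM : (ι → ℝ) → (ι → ℂ) →L[ℂ] ℂ) := by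
  unfold dotCLM
  fun_prop

theorem norm_dotCLM_le {u : ι → ℝ} (hu : ∀ j, 0 ≤ u j) : ‖dotCLM u‖ ≤ ∑ j, u j :=
  ContinuousLinearMap.opNorm_le_bound _ (Finset.sum_nonneg fun j _ => hu j) fun z => by
    rw [dotCLM_apply, mul_comm]
    exact norm_sum_mul_ofReal_le z hu

theorem norm_exp_dotCLM_smul_le {z : ι → ℂ} {u : ι → ℝ} {δ : ℝ} (hδ : 0 < δ)
    (hz : ∀ j, (z j).re ≤ -δ) (hu : ∀ j, 0 ≤ u j) :
    ‖Complex.exp (dotCLM u z) • dotCLM u‖ ≤ max 1 δ⁻¹ * min 1 (∑ j, u j) := by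
  have hre : (dotCLM u z).re ≤ -δ * ∑ j, u j := by
    rw [dotCLM_apply]; exact re_sum_mul_ofReal_le hz hu
  calc ‖Complex.exp (dotCLM u z) • dotCLM u‖
        ≤ Real.exp (-(δ * ∑ j, u j)) * ∑ j, u j := by
          rw [norm_smul, Complex.norm_exp]
          gcongr
          · linarith
          · exact norm_dotCLM_le hu
    _ = (∑ j, u j) * Real.exp (-(δ * ∑ j, u j)) := mul_comm _ _
    _ ≤ max 1 δ⁻¹ * min 1 (∑ j, u j) :=
        mul_exp_neg_mul_le hδ (Finset.sum_nonneg fun j _ => hu j)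

end WeightedSum

section Integral

variable {ι : Type*} [Fintype ι] {μ : Measure (ι → ℝ)}

noncomputable def expSubOneIntegral (μ : Measure (ι → ℝ)) (z : ι → ℂ) : ℂ :=
  ∫ u, (Complex.exp (∑ j, z j * u j) - 1) ∂μ

theorem integrable_min_one_sum_of_lintegral_lt_top (hμ : ∀ᵐ u ∂μ, ∀ j, 0 ≤ u j)
    (h : ∫⁻ u, ENNReal.ofReal (min 1 (∑ j, u j)) ∂μ < ⊤) :
    Integrable (fun u => min 1 (∑ j, u j)) μ := by
  refine ⟨by fun_prop, (hasFiniteIntegral_iff_ofReal ?_).2 h⟩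
  filter_upwards [hμ] with u hu
  exact le_min zero_le_one (Finset.sum_nonneg fun j _ => hu j)

theorem continuous_exp_sum_mul_ofReal_sub_one (z : ι → ℂ) :
    Continuous fun u : ι → ℝ => Complex.exp (∑ j, z j * u j) - 1 := by
  fun_prop

theorem integrable_exp_sum_mul_ofReal_sub_one (hμ : ∀ᵐ u ∂μ, ∀ j, 0 ≤ u j)
    (hint : Integrable (fun u => min 1 (∑ j, u j)) μ) {z : ι → ℂ} (hz : ∀ j, (z j).re ≤ 0) :
    Integrable (fun u => Complex.exp (∑ j, z j * u j) - 1) μ :=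
  (hint.const_mul _).mono' (continuous_exp_sum_mul_ofReal_sub_one z).aestronglyMeasurable
    (hμ.mono fun _ hu => norm_exp_sum_mul_ofReal_sub_one_le hz hu)

theorem exists_pos_forall_re_lt_neg {z : ι → ℂ} (hz : ∀ j, (z j).re < 0) :
    ∃ δ > 0, ∀ j, (z j).re < -δ := by
  have : ∀ᶠ δ in 𝓝 (0 : ℝ), ∀ j, (z j).re < -δ :=
    eventually_all.2 fun j => (continuous_neg.tendsto' 0 0 neg_zero).eventually (lt_mem_nhds (hz j))
  exact ((this.filter_mono nhdsWithin_le_nhds : ∀ᶠ δ in 𝓝[>] (0 : ℝ), _).and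
    self_mem_nhdsWithin).exists.imp fun δ h => ⟨h.2, h.1⟩

theorem differentiableAt_expSubOneIntegral (hμ : ∀ᵐ u ∂μ, ∀ j, 0 ≤ u j)
    (hint : Integrable (fun u => min 1 (∑ j, u j)) μ) {z₀ : ι → ℂ} (hz₀ : ∀ j, (z₀ j).re < 0) :
    DifferentiableAt ℂ (expSubOneIntegral μ) z₀ := by
  obtain ⟨δ, hδ, hz₀δ⟩ := exists_pos_forall_re_lt_neg hz₀
  have hU : {z : ι → ℂ | ∀ j, (z j).re < -δ} ∈ 𝓝 z₀ := by
    refine IsOpen.mem_nhds ?_ hz₀δ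
    simp only [Set.ofPred_forall]
    exact isOpen_iInter_of_finite fun j => isOpen_lt (by fun_prop) continuous_const
  have hderiv (u : ι → ℝ) (z : ι → ℂ) : HasFDerivAt
      (fun z : ι → ℂ => Complex.exp (∑ j, z j * u j) - 1)
      (Complex.exp (dotCLM u z) • dotCLM u) z := by
    simp_rw [← dotCLM_apply u]
    exact ((Complex.hasDerivAt_exp _).comp_hasFDerivAt z (dotCLM u).hasFDerivAt).sub_const 1
  refine (hasFDerivAt_integral_of_dominated_of_fderiv_le hU
    (Eventually.of_forall fun z => (continuous_exp_sum_mul_ofReal_sub_one z).aestronglyMeasurable)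
    (integrable_exp_sum_mul_ofReal_sub_one hμ hint fun j => (hz₀ j).le) ?_ ?_
    (hint.const_mul (max 1 δ⁻¹)) (Eventually.of_forall fun u z _ => hderiv u z)).differentiableAt
  · exact (Complex.continuous_exp.comp (continuous_dotCLM.clm_apply continuous_const)).smul
      continuous_dotCLM |>.aestronglyMeasurable
  · filter_upwards [hμ] with u hu z hz
    exact norm_exp_dotCLM_smul_le hδ (fun j => (hz j).le) hu

theorem continuousOn_expSubOneIntegral (hμ : ∀ᵐ u ∂μ, ∀ j, 0 ≤ u j)
    (hint : Integrable (fun u => min 1 (∑ j, u j)) μ) :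
    ContinuousOn (expSubOneIntegral μ) {z : ι → ℂ | ∀ j, (z j).re ≤ 0} := by
  intro z₀ _
  have hnorm : ∀ᶠ z in 𝓝[{z | ∀ j, (z j).re ≤ 0}] z₀, ‖z‖ < ‖z₀‖ + 1 :=
    nhdsWithin_le_nhds ((continuous_norm.tendsto z₀).eventually (gt_mem_nhds (lt_add_one _)))
  refine continuousWithinAt_of_dominated
    (Eventually.of_forall fun z => (continuous_exp_sum_mul_ofReal_sub_one z).aestronglyMeasurable)
    ?_ (hint.const_mul (2 * max 1 (‖z₀‖ + 1)))
    (Eventually.of_forall fun u => Continuous.continuousWithinAt (by fun_prop))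
  filter_upwards [hnorm, self_mem_nhdsWithin] with z hz hre
  filter_upwards [hμ] with u hu
  calc ‖Complex.exp (∑ j, z j * u j) - 1‖ ≤ 2 * max 1 ‖z‖ * min 1 (∑ j, u j) :=
        norm_exp_sum_mul_ofReal_sub_one_le hre hu
    _ ≤ 2 * max 1 (‖z₀‖ + 1) * min 1 (∑ j, u j) := by
        gcongr
        exact le_min zero_le_one (Finset.sum_nonneg fun j _ => hu j)

end Integral

theorem bernstein_function_holomorphic_extension_general
    (n : ℕ) (μ : Measure (Fin n → ℝ))
    (hμsupp : μ {u | ¬(u ∈ posOrthant n ∧ u ≠ 0)} = 0)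
    (hμint : ∫⁻ u, ENNReal.ofReal (min 1 (∑ j, u j)) ∂μ < ⊤)
    (c₀ : ℝ) (c₁ : Fin n → ℝ) :
    (∀ z : Fin n → ℂ, (∀ j, (z j).re ≤ 0) →
        Integrable (fun u => Complex.exp (∑ j, z j * (u j : ℂ)) - 1) μ)
    ∧ DifferentiableOn ℂ
        (fun z : Fin n → ℂ =>
          (c₀ : ℂ) + (∑ j, (c₁ j : ℂ) * z j)
            + ∫ u, (Complex.exp (∑ j, z j * (u j : ℂ)) - 1) ∂μ)
        {z : Fin n → ℂ | ∀ j, (z j).re < 0}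
    ∧ ContinuousOn
        (fun z : Fin n → ℂ =>
          (c₀ : ℂ) + (∑ j, (c₁ j : ℂ) * z j)
            + ∫ u, (Complex.exp (∑ j, z j * (u j : ℂ)) - 1) ∂μ)
        {z : Fin n → ℂ | ∀ j, (z j).re ≤ 0} := by
  have hμ : ∀ᵐ u ∂μ, ∀ j, 0 ≤ u j := (ae_iff.2 hμsupp).mono fun _ hu => hu.1
  have hint := integrable_min_one_sum_of_lintegral_lt_top hμ hμint
  have haffine : Differentiable ℂ fun z : Fin n → ℂ => (c₀ : ℂ) + ∑ j, (c₁ j : ℂ) * z j := by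
    fun_prop
  refine ⟨fun z hz => integrable_exp_sum_mul_ofReal_sub_one hμ hint hz, fun z hz => ?_,
    haffine.continuous.continuousOn.add (continuousOn_expSubOneIntegral hμ hint)⟩
  exact ((haffine z).add (differentiableAt_expSubOneIntegral hμ hint hz)).differentiableWithinAt

/-- Let `μ` be a positive measure on `ℝ₊ⁿ∖{0}` with
`∫ min(1, Σ_j u_j) dμ(u) < ∞`, `c₀ ∈ ℝ`, `c₁ ∈ ℝ₊ⁿ`. Then
`ψ(z) = c₀ + c₁·z + ∫ (e^{z·u} − 1) dμ(u)` is well defined for `Re z_j ≤ 0` (the integrand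
is Bochner integrable), holomorphic on `{Re z_j < 0}` and continuous on `{Re z_j ≤ 0}`. -/
theorem bernstein_function_holomorphic_extension
    (n : ℕ) (μ : Measure (Fin n → ℝ))
    (hμsupp : μ {u | ¬(u ∈ posOrthant n ∧ u ≠ 0)} = 0)
    (hμint : ∫⁻ u, ENNReal.ofReal (min 1 (∑ j, u j)) ∂μ < ⊤)
    (c₀ : ℝ) (c₁ : Fin n → ℝ) (hc₁ : ∀ j, 0 ≤ c₁ j) :
    (∀ z : Fin n → ℂ, (∀ j, (z j).re ≤ 0) →
        Integrable (fun u => Complex.exp (∑ j, z j * (u j : ℂ)) - 1) μ)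
    ∧ DifferentiableOn ℂ
        (fun z : Fin n → ℂ =>
          (c₀ : ℂ) + (∑ j, (c₁ j : ℂ) * z j)
            + ∫ u, (Complex.exp (∑ j, z j * (u j : ℂ)) - 1) ∂μ)
        {z : Fin n → ℂ | ∀ j, (z j).re < 0}
    ∧ ContinuousOn
        (fun z : Fin n → ℂ =>
          (c₀ : ℂ) + (∑ j, (c₁ j : ℂ) * z j)
            + ∫ u, (Complex.exp (∑ j, z j * (u j : ℂ)) - 1) ∂μ)
        {z : Fin n → ℂ | ∀ j, (z j).re ≤ 0} :=
  bernstein_function_holomorphic_extension_general n μ hμsupp hμint c₀ c₁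
end

section
/- The linear span of the family of functions {u ↦ e^{s·u} : s ∈ (−∞,0)ⁿ} is dense in the Banach space C₀(ℝ₊ⁿ, ℂ) of continuous complex-valued functions on ℝ₊ⁿ := [0,∞)ⁿ vanishing at infinity, equipped with the supremum norm. -/
open scoped ZeroAtInfty

/-- The positive orthant `ℝ₊ⁿ = [0,∞)ⁿ` as a topological space. -/
abbrev PosOrthant (n : ℕ) : Type := {u : Fin n → ℝ // ∀ j, 0 ≤ u j}

/-!
The kernels `e^{s·u}`, `s ∈ (−∞,0)ⁿ`, are real, vanish at infinity (as `s·u ≤ -c‖u‖`), vanish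
nowhere, are closed under multiplication (`e^{s·u} e^{t·u} = e^{(s+t)·u}`) and separate points
(pairing with `s = -1` and `s = -1 - eᵢ` recovers `uᵢ`). Extended by zero to the one-point
compactification and joined with the constants, they generate a star subalgebra separating
points, hence a dense one by Stone–Weierstrass; subtracting the value at `∞` carries an
approximant back into the span at the cost of a factor `2` in the error.
-/

open Filter Topology OnePoint

namespace ZeroAtInftyContinuousMap

variable {X 𝕜 : Type*} [TopologicalSpace X] [RCLike 𝕜]

section R1Space

variable [R1Space X]

noncomputable def toOnePoint : C₀(X, 𝕜) →⋆ₙₐ[𝕜] C(OnePoint X, 𝕜) where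
  toFun f := OnePoint.continuousMapMk f 0 (by simpa using f.zero_at_infty')
  map_smul' c f := by ext x; induction x using OnePoint.rec <;> simp [OnePoint.continuousMapMk]
  map_zero' := by ext x; induction x using OnePoint.rec <;> simp [OnePoint.continuousMapMk]
  map_add' f g := by ext x; induction x using OnePoint.rec <;> simp [OnePoint.continuousMapMk]
  map_mul' f g := by ext x; induction x using OnePoint.rec <;> simp [OnePoint.continuousMapMk]
  map_star' f := by ext x; induction x using OnePoint.rec <;> simp [OnePoint.continuousMapMk]

@[simp]
lemma toOnePoint_coe (f : C₀(X, 𝕜)) (x : X) : toOnePoint f x = f x := rfl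

@[simp]
lemma toOnePoint_infty (f : C₀(X, 𝕜)) : toOnePoint f ∞ = 0 := rfl

/-- Evaluating at `∞` bounds the constant by the distance, whence the factor `2`. -/
lemma dist_le_two_mul_dist_toOnePoint_add_const (f h : C₀(X, 𝕜)) (c : 𝕜) :
    dist f h ≤ 2 * dist (toOnePoint f) (algebraMap 𝕜 _ c + toOnePoint h) := by
  set d := dist (toOnePoint f) (algebraMap 𝕜 _ c + toOnePoint h)
  have hc : ‖c‖ ≤ d := by
    simpa using ContinuousMap.dist_apply_le_dist (f := toOnePoint f)
      (g := algebraMap 𝕜 _ c + toOnePoint h) ∞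
  rw [← dist_toBCF_eq_dist, BoundedContinuousFunction.dist_le (by positivity)]
  intro x
  calc dist (f x) (h x) ≤ dist (f x) (c + h x) + dist (c + h x) (h x) := dist_triangle _ _ _
    _ ≤ d + d := by
      gcongr
      · simpa using ContinuousMap.dist_apply_le_dist (f := toOnePoint f)
          (g := algebraMap 𝕜 _ c + toOnePoint h) x
      · simpa [dist_eq_norm] using hc
    _ = 2 * d := by ring

end R1Space

variable [T2Space X] [WeaklyLocallyCompactSpace X]

/-- Stone–Weierstrass on the one-point compactification. -/
theorem nonUnitalStarSubalgebra_dense_of_separatesPoints (A : NonUnitalStarSubalgebra 𝕜 C₀(X, 𝕜))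
    (hsep : ∀ x y, x ≠ y → ∃ f ∈ A, f x ≠ f y) (hvanish : ∀ x, ∃ f ∈ A, f x ≠ 0) :
    Dense (A : Set C₀(X, 𝕜)) := by
  set B := StarAlgebra.adjoin 𝕜 (A.map toOnePoint : Set C(OnePoint X, 𝕜))
  have hB : B.SeparatesPoints := by
    have mem : ∀ f ∈ A, ⇑(toOnePoint f) ∈ (fun g : C(OnePoint X, 𝕜) ↦ ⇑g) '' (B : Set _) :=
      fun f hf ↦ ⟨_, StarAlgebra.subset_adjoin _ _ ⟨f, hf, rfl⟩, rfl⟩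
    intro x y hxy
    cases x with
    | infty =>
      cases y with
      | infty => exact absurd rfl hxy
      | coe y =>
        obtain ⟨f, hf, hfy⟩ := hvanish y
        exact ⟨_, mem f hf, by simpa using hfy.symm⟩
    | coe x =>
      cases y with
      | infty =>
        obtain ⟨f, hf, hfx⟩ := hvanish x
        exact ⟨_, mem f hf, by simpa using hfx⟩
      | coe y =>
        obtain ⟨f, hf, hfxy⟩ := hsep x y (fun h ↦ hxy (congrArg _ h))
        exact ⟨_, mem f hf, by simpa using hfxy⟩
  have hBdense := ContinuousMap.starSubalgebra_topologicalClosure_eq_top_of_separatesPoints B hB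
  refine fun f ↦ Metric.mem_closure_iff.2 fun ε hε ↦ ?_
  have hf : toOnePoint f ∈ closure (B : Set C(OnePoint X, 𝕜)) := by
    rw [← StarSubalgebra.topologicalClosure_coe, hBdense]
    trivial
  obtain ⟨g, hgB, hfg⟩ := Metric.mem_closure_iff.1 hf (ε / 2) (by positivity)
  have hg : g ∈ Submodule.span 𝕜 {1} ⊔ (A.map toOnePoint).toSubmodule := by
    rwa [← StarAlgebra.adjoin_nonUnitalStarSubalgebra_eq_span]
  obtain ⟨_, hc, _, ⟨h, hhA, rfl⟩, rfl⟩ := Submodule.mem_sup.1 hg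
  obtain ⟨c, rfl⟩ := Submodule.mem_span_singleton.1 hc
  refine ⟨h, hhA, ?_⟩
  calc dist f h ≤ 2 * dist (toOnePoint f) (algebraMap 𝕜 _ c + toOnePoint h) :=
        dist_le_two_mul_dist_toOnePoint_add_const f h c
    _ < 2 * (ε / 2) := by rw [Algebra.algebraMap_eq_smul_one]; gcongr; exact hfg
    _ = ε := by ring

theorem dense_span_of_separatesPoints {S : Set C₀(X, 𝕜)}
    (hmul : ∀ f ∈ S, ∀ g ∈ S, f * g ∈ S) (hstar : ∀ f ∈ S, star f ∈ S)
    (hsep : ∀ x y, x ≠ y → ∃ f ∈ S, f x ≠ f y) (hvanish : ∀ x, ∃ f ∈ S, f x ≠ 0) :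
    Dense (Submodule.span 𝕜 S : Set C₀(X, 𝕜)) := by
  have hstar_subset : star S ⊆ S := fun f hf ↦ star_star f ▸ hstar _ hf
  have hadjoin : (NonUnitalStarAlgebra.adjoin 𝕜 S).toSubmodule = Submodule.span 𝕜 S := by
    rw [NonUnitalStarAlgebra.adjoin_eq_span, Set.union_eq_left.2 hstar_subset]
    exact congrArg (Submodule.span 𝕜 <| SetLike.coe ·)
      (Subsemigroup.closure_eq ⟨S, fun ha hb ↦ hmul _ ha _ hb⟩)
  rw [← hadjoin]
  refine nonUnitalStarSubalgebra_dense_of_separatesPoints _ (fun x y hxy ↦ ?_) fun x ↦ ?_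
  · obtain ⟨f, hf, hfxy⟩ := hsep x y hxy
    exact ⟨f, NonUnitalStarAlgebra.subset_adjoin 𝕜 S hf, hfxy⟩
  · obtain ⟨f, hf, hfx⟩ := hvanish x
    exact ⟨f, NonUnitalStarAlgebra.subset_adjoin 𝕜 S hf, hfx⟩

end ZeroAtInftyContinuousMap

lemma eq_of_forall_neg_dotProduct_eq {ι : Type*} [Fintype ι] [DecidableEq ι]
    {u v : ι → ℝ} (h : ∀ s : ι → ℝ, (∀ j, s j < 0) → s ⬝ᵥ u = s ⬝ᵥ v) : u = v := by
  funext i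
  have h₁ := h (-1) fun _ ↦ by simp
  have h₂ := h (-1 - Pi.single i 1) fun j ↦ by
    by_cases hj : j = i <;> simp [hj]
  simp only [sub_dotProduct, single_dotProduct, one_mul, h₁] at h₂
  linarith

namespace PosOrthant

variable {n : ℕ}

lemma isClosedEmbedding_subtypeVal : IsClosedEmbedding ((↑) : PosOrthant n → Fin n → ℝ) :=
  (isClosed_Ici : IsClosed (Set.Ici (0 : Fin n → ℝ))).isClosedEmbedding_subtypeVal

instance : LocallyCompactSpace (PosOrthant n) :=
  isClosedEmbedding_subtypeVal.locallyCompactSpace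

lemma dotProduct_le_neg_mul_norm {s : Fin n → ℝ} {c : ℝ} (hc : 0 ≤ c) (hs : ∀ j, s j ≤ -c)
    (u : PosOrthant n) : s ⬝ᵥ u.1 ≤ -c * ‖u.1‖ := by
  have hnorm : ‖u.1‖ ≤ ∑ j, u.1 j :=
    (pi_norm_le_iff_of_nonneg (Finset.sum_nonneg fun j _ ↦ u.2 j)).2 fun j ↦ by
      rw [Real.norm_of_nonneg (u.2 j)]
      exact Finset.single_le_sum (fun i _ ↦ u.2 i) (Finset.mem_univ j)
  calc s ⬝ᵥ u.1 ≤ ∑ j, -c * u.1 j :=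
        Finset.sum_le_sum fun j _ ↦ mul_le_mul_of_nonneg_right (hs j) (u.2 j)
    _ = -c * ∑ j, u.1 j := by rw [Finset.mul_sum]
    _ ≤ -c * ‖u.1‖ := mul_le_mul_of_nonpos_left hnorm (neg_nonpos.2 hc)

lemma tendsto_dotProduct_cocompact_atBot {s : Fin n → ℝ} (hs : ∀ j, s j < 0) :
    Tendsto (fun u : PosOrthant n ↦ s ⬝ᵥ u.1) (cocompact _) atBot := by
  obtain ⟨⟨c, hc⟩, hsc⟩ := Finite.exists_ge fun j ↦ (⟨-s j, neg_pos.2 (hs j)⟩ : Set.Ioi (0 : ℝ))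
  have hnorm : Tendsto (fun u : PosOrthant n ↦ ‖u.1‖) (cocompact _) atTop :=
    tendsto_norm_cocompact_atTop.comp isClosedEmbedding_subtypeVal.tendsto_cocompact
  exact tendsto_atBot_mono (dotProduct_le_neg_mul_norm hc.le fun j ↦ le_neg_of_le_neg (hsc j))
    (hnorm.const_mul_atTop_of_neg (neg_neg_of_pos hc))

noncomputable def expDot (s : Fin n → ℝ) (hs : ∀ j, s j < 0) : C₀(PosOrthant n, ℂ) where
  toFun u := Real.exp (s ⬝ᵥ u.1)
  zero_at_infty' := by
    rw [← Complex.ofReal_zero]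
    exact (Complex.continuous_ofReal.tendsto 0).comp
      (Real.tendsto_exp_atBot.comp (tendsto_dotProduct_cocompact_atBot hs))

@[simp]
lemma expDot_apply (s : Fin n → ℝ) (hs : ∀ j, s j < 0) (u : PosOrthant n) :
    expDot s hs u = Real.exp (s ⬝ᵥ u.1) := rfl

lemma expDot_mul_expDot {s t : Fin n → ℝ} (hs : ∀ j, s j < 0) (ht : ∀ j, t j < 0) :
    expDot s hs * expDot t ht = expDot (s + t) fun j ↦ add_neg (hs j) (ht j) := by
  ext u
  simp [add_dotProduct, Real.exp_add]

lemma star_expDot {s : Fin n → ℝ} (hs : ∀ j, s j < 0) : star (expDot s hs) = expDot s hs := by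
  ext u
  rw [ZeroAtInftyContinuousMap.star_apply, expDot_apply, Complex.star_def, Complex.conj_ofReal]

lemma expDot_apply_ne_zero {s : Fin n → ℝ} (hs : ∀ j, s j < 0) (u : PosOrthant n) :
    expDot s hs u ≠ 0 := by
  simp

lemma exists_expDot_apply_ne {u v : PosOrthant n} (huv : u ≠ v) :
    ∃ s hs, expDot s hs u ≠ expDot s hs v := by
  by_contra! h
  refine huv (Subtype.ext (eq_of_forall_neg_dotProduct_eq fun s hs ↦ ?_))
  exact Real.exp_injective (Complex.ofReal_injective (h s hs))

lemma setOf_eq_range_expDot :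
    {g : C₀(PosOrthant n, ℂ) | ∃ s : Fin n → ℝ, (∀ j, s j < 0) ∧
      ∀ u : PosOrthant n, g u = Complex.exp (∑ j, (s j : ℂ) * ((u : Fin n → ℝ) j : ℂ))} =
    Set.range fun s : {s : Fin n → ℝ // ∀ j, s j < 0} ↦ expDot s.1 s.2 := by
  have hexp (s : Fin n → ℝ) (u : PosOrthant n) :
      Complex.exp (∑ j, (s j : ℂ) * ((u : Fin n → ℝ) j : ℂ)) = Real.exp (s ⬝ᵥ u.1) := by
    simp [dotProduct, Complex.ofReal_exp]
  ext g
  constructor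
  · rintro ⟨s, hs, hg⟩
    exact ⟨⟨s, hs⟩, ZeroAtInftyContinuousMap.ext fun u ↦ by simp [hg, hexp]⟩
  · rintro ⟨⟨s, hs⟩, rfl⟩
    exact ⟨s, hs, fun u ↦ by simp [hexp]⟩

end PosOrthant

/-- The linear span of the exponentials `u ↦ e^{s·u}`, `s ∈ (−∞,0)ⁿ`,
is dense in the Banach space `C₀(ℝ₊ⁿ, ℂ)` of continuous complex functions on
`ℝ₊ⁿ = [0,∞)ⁿ` vanishing at infinity, with the supremum norm. -/
theorem span_exponentials_dense_in_C0 (n : ℕ) :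
    Dense ((Submodule.span ℂ
        {g : C₀(PosOrthant n, ℂ) | ∃ s : Fin n → ℝ, (∀ j, s j < 0) ∧
          ∀ u : PosOrthant n, g u = Complex.exp (∑ j, (s j : ℂ) * ((u : Fin n → ℝ) j : ℂ))}
        : Submodule ℂ C₀(PosOrthant n, ℂ)) : Set C₀(PosOrthant n, ℂ)) := by
  rw [PosOrthant.setOf_eq_range_expDot]
  apply ZeroAtInftyContinuousMap.dense_span_of_separatesPoints
  · rintro _ ⟨⟨s, hs⟩, rfl⟩ _ ⟨⟨t, ht⟩, rfl⟩
    exact ⟨⟨s + t, fun j ↦ add_neg (hs j) (ht j)⟩, (PosOrthant.expDot_mul_expDot hs ht).symm⟩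
  · rintro _ ⟨⟨s, hs⟩, rfl⟩
    exact ⟨⟨s, hs⟩, (PosOrthant.star_expDot hs).symm⟩
  · intro u v huv
    obtain ⟨s, hs, hsuv⟩ := PosOrthant.exists_expDot_apply_ne huv
    exact ⟨_, ⟨⟨s, hs⟩, rfl⟩, hsuv⟩
  · intro u
    have hs : ∀ j : Fin n, (-1 : Fin n → ℝ) j < 0 := fun _ ↦ by simp
    exact ⟨_, ⟨⟨-1, hs⟩, rfl⟩, PosOrthant.expDot_apply_ne_zero hs u⟩
end

section
/- Let B be a complex Banach space, C > 0, q ∈ (0,1), and let U : (0,∞) → B be infinitely differentiable with ‖U^{(m)}(t)‖ ≤ m! (e C t^{−1})^m for all t > 0 and all integers m ≥ 0. Set θ := arctan(q/(eC)). Then U extends to an analytic function on the sector Σ(θ) := {z ∈ ℂ : Re z > 0, |arg z| < θ}, given for z ∈ Σ(θ) by the convergent series U(z) = Σ_{m=0}^∞ (1/m!) U^{(m)}(Re z) (i Im z)^m, and this extension satisfies ‖U(z)‖ ≤ 1/(1−q) for all z ∈ Σ(θ). -/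
open Complex

namespace Statement17Aux

noncomputable def gg (m : ℕ) (t : ℝ) : ℂ := (I * t) ^ m / m.factorial

noncomputable def gg' (m : ℕ) (t : ℝ) : ℂ := ((m : ℂ) * (I * t) ^ (m - 1) * I) / m.factorial

lemma hasDerivAt_gg (m : ℕ) (t : ℝ) : HasDerivAt (gg m) (gg' m t) t := by
  have h0 : HasDerivAt (fun w : ℂ => (I * w) ^ m / m.factorial)
      (((m : ℂ) * (I * (t : ℂ)) ^ (m - 1) * I) / m.factorial) (t : ℂ) := by
    simpa using (((hasDerivAt_id (t : ℂ)).const_mul I).pow m).div_const (m.factorial : ℂ)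
  have h1 : HasDerivAt (fun t : ℝ => (t : ℂ)) 1 t := by
    exact Complex.ofRealCLM.hasDerivAt (x := t)
  have h2 := h0.scomp t h1
  rw [one_smul] at h2
  exact h2

lemma norm_gg (m : ℕ) (t : ℝ) : ‖gg m t‖ = |t| ^ m / m.factorial := by
  simp [gg, norm_div, norm_pow]

lemma norm_gg' (m : ℕ) (t : ℝ) : ‖gg' m t‖ = m * |t| ^ (m - 1) / m.factorial := by
  simp [gg', norm_div, norm_pow, norm_mul]

variable {B : Type*} [NormedAddCommGroup B] [NormedSpace ℂ B]

lemma comp_re {f : ℝ → B} {v : B} {z : ℂ} (h : HasDerivAt f v z.re) :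
    HasFDerivAt (fun w : ℂ => f w.re) (Complex.reCLM.smulRight v) z := by
  have := (hasDerivAt_iff_hasFDerivAt.1 h).comp z Complex.reCLM.hasFDerivAt
  exact this

lemma comp_im {f : ℝ → ℂ} {v : ℂ} {z : ℂ} (h : HasDerivAt f v z.im) :
    HasFDerivAt (fun w : ℂ => f w.im) (Complex.imCLM.smulRight v) z := by
  have := (hasDerivAt_iff_hasFDerivAt.1 h).comp z Complex.imCLM.hasFDerivAt
  exact this

noncomputable def LL (D : ℕ → ℝ → B) (m : ℕ) (z : ℂ) : ℂ →L[ℝ] B :=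
  gg m z.im • (Complex.reCLM.smulRight (D (m + 1) z.re)) +
    (Complex.imCLM.smulRight (gg' m z.im)).smulRight (D m z.re)

lemma hasFDerivAt_term (D : ℕ → ℝ → B)
    (hderiv : ∀ m : ℕ, ∀ t : ℝ, 0 < t → HasDerivAt (D m) (D (m + 1) t) t)
    (m : ℕ) (z : ℂ) (hz : 0 < z.re) :
    HasFDerivAt (fun w : ℂ => gg m w.im • D m w.re) (LL D m z) z := by
  have hgz : HasFDerivAt (fun w : ℂ => gg m w.im)
      (Complex.imCLM.smulRight (gg' m z.im)) z := comp_im (hasDerivAt_gg m z.im)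
  have hdz : HasFDerivAt (fun w : ℂ => D m w.re)
      (Complex.reCLM.smulRight (D (m + 1) z.re)) z := comp_re (hderiv m z.re hz)
  exact hgz.smul hdz

lemma opnorm_smulRight_le (L : ℂ →L[ℝ] ℂ) (v : B) : ‖L.smulRight v‖ ≤ ‖L‖ * ‖v‖ := by
  refine ContinuousLinearMap.opNorm_le_bound _ (by positivity) (fun w => ?_)
  rw [ContinuousLinearMap.smulRight_apply, norm_smul]
  calc ‖L w‖ * ‖v‖ ≤ (‖L‖ * ‖w‖) * ‖v‖ := by
        gcongr; exact L.le_opNorm w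
    _ = ‖L‖ * ‖v‖ * ‖w‖ := by ring

lemma opnorm_smul_le (a : ℂ) (L : ℂ →L[ℝ] B) : ‖a • L‖ ≤ ‖a‖ * ‖L‖ := by
  refine ContinuousLinearMap.opNorm_le_bound _ (by positivity) (fun w => ?_)
  rw [ContinuousLinearMap.smul_apply, norm_smul]
  calc ‖a‖ * ‖L w‖ ≤ ‖a‖ * (‖L‖ * ‖w‖) := by
        gcongr; exact L.le_opNorm w
    _ = ‖a‖ * ‖L‖ * ‖w‖ := by ring

lemma norm_LL_le (D : ℕ → ℝ → B) (m : ℕ) (z : ℂ) :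
    ‖LL D m z‖ ≤ |z.im| ^ m / m.factorial * ‖D (m + 1) z.re‖
      + m * |z.im| ^ (m - 1) / m.factorial * ‖D m z.re‖ := by
  refine (norm_add_le _ _).trans ?_
  have h1 : ‖gg m z.im • (Complex.reCLM.smulRight (D (m + 1) z.re))‖
      ≤ |z.im| ^ m / m.factorial * ‖D (m + 1) z.re‖ := by
    refine (opnorm_smul_le _ _).trans ?_
    rw [norm_gg, ContinuousLinearMap.norm_smulRight_apply, Complex.reCLM_norm, one_mul]
  have h2 : ‖(Complex.imCLM.smulRight (gg' m z.im)).smulRight (D m z.re)‖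
      ≤ m * |z.im| ^ (m - 1) / m.factorial * ‖D m z.re‖ := by
    refine (opnorm_smulRight_le _ _).trans ?_
    rw [ContinuousLinearMap.norm_smulRight_apply, Complex.imCLM_norm, one_mul, norm_gg']
  exact add_le_add h1 h2

lemma term_bound (c q : ℝ) (hc : 0 < c) (hq0 : 0 ≤ q) (D : ℕ → ℝ → B)
    (hbound : ∀ m : ℕ, ∀ t : ℝ, 0 < t → ‖D m t‖ ≤ (m.factorial : ℝ) * (c / t) ^ m)
    (z : ℂ) (hz : 0 < z.re) (him : c * |z.im| ≤ q * z.re) (m : ℕ) :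
    ‖gg m z.im • D m z.re‖ ≤ q ^ m := by
  have hfac : (0 : ℝ) < m.factorial := by exact_mod_cast m.factorial_pos
  have hkey : c / z.re * |z.im| ≤ q := by
    rw [div_mul_eq_mul_div, div_le_iff₀ hz]
    linarith
  have hkey0 : 0 ≤ c / z.re * |z.im| := by positivity
  calc ‖gg m z.im • D m z.re‖ = |z.im| ^ m / m.factorial * ‖D m z.re‖ := by
        rw [norm_smul, norm_gg]
    _ ≤ |z.im| ^ m / m.factorial * ((m.factorial : ℝ) * (c / z.re) ^ m) :=
        mul_le_mul_of_nonneg_left (hbound m z.re hz) (by positivity)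
    _ = (c / z.re * |z.im|) ^ m := by
        rw [mul_pow]; field_simp
    _ ≤ q ^ m := pow_le_pow_left₀ hkey0 hkey m

variable [CompleteSpace B]

lemma key_diff (c q : ℝ) (hc : 0 < c) (hq0 : 0 < q) (hq1 : q < 1) (D : ℕ → ℝ → B)
    (hderiv : ∀ m : ℕ, ∀ t : ℝ, 0 < t → HasDerivAt (D m) (D (m + 1) t) t)
    (hbound : ∀ m : ℕ, ∀ t : ℝ, 0 < t → ‖D m t‖ ≤ (m.factorial : ℝ) * (c / t) ^ m)
    (z₀ : ℂ) (hre : 0 < z₀.re) (him : c * |z₀.im| < q * z₀.re) :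
    DifferentiableAt ℂ (fun z : ℂ => ∑' m : ℕ, gg m z.im • D m z.re) z₀ := by
  set r := z₀.re with hr
  have hrpos : 0 < r := hre
  set d := q * r - c * |z₀.im| with hdd
  have hd : 0 < d := by simp only [hdd]; linarith
  set ε := min (r / 2) (d / (2 * (c + q))) with hε'
  have hε : 0 < ε := lt_min (by linarith) (by positivity)
  set s := Metric.ball z₀ ε with hs
  -- facts on the ball
  have hball : ∀ z ∈ s, r / 2 ≤ z.re ∧ c * |z.im| ≤ q * z.re ∧ 0 < z.re := by
    intro z hzs
    have hdist : ‖z - z₀‖ < ε := by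
      rw [Metric.mem_ball, Complex.dist_eq] at hzs; exact hzs
    have hre' : |z.re - z₀.re| < ε :=
      lt_of_le_of_lt (by simpa using Complex.abs_re_le_norm (z - z₀)) hdist
    have him' : |z.im - z₀.im| < ε :=
      lt_of_le_of_lt (by simpa using Complex.abs_im_le_norm (z - z₀)) hdist
    rw [abs_lt] at hre'
    have h1 : ε ≤ r / 2 := min_le_left _ _
    have h2 : ε ≤ d / (2 * (c + q)) := min_le_right _ _
    have h2' : (c + q) * ε ≤ d / 2 := by
      rw [le_div_iff₀ (by positivity)] at h2
      nlinarith
    have hzre : r / 2 ≤ z.re := by linarith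
    have hzim : |z.im| ≤ |z₀.im| + ε := by
      have h := abs_sub_abs_le_abs_sub z.im z₀.im
      linarith
    refine ⟨hzre, ?_, by linarith⟩
    nlinarith [abs_nonneg z.im, abs_nonneg z₀.im]
  have hz₀s : z₀ ∈ s := Metric.mem_ball_self hε
  -- summable bound for derivatives
  set u : ℕ → ℝ := fun m => (2 * c / r) * (((m : ℝ) + 1) * q ^ m)
    + (2 * c / (r * q)) * ((m : ℝ) * q ^ m) with hu'
  have hqn : ‖q‖ < 1 := by rw [Real.norm_eq_abs, abs_of_pos hq0]; exact hq1
  have hS2 : Summable (fun m : ℕ => (m : ℝ) * q ^ m) := by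
    simpa using summable_pow_mul_geometric_of_norm_lt_one 1 hqn
  have hS1 : Summable (fun m : ℕ => ((m : ℝ) + 1) * q ^ m) := by
    have := hS2.add (summable_geometric_of_lt_one hq0.le hq1)
    simpa [add_mul] using this
  have hu : Summable u := (hS1.mul_left _).add (hS2.mul_left _)
  -- the first-part bound, valid for all z in the ball and every m
  have h1 : ∀ z ∈ s, ∀ m : ℕ,
      |z.im| ^ m / m.factorial * ‖D (m + 1) z.re‖ ≤ (2 * c / r) * (((m : ℝ) + 1) * q ^ m) := by
    intro z hzs m
    obtain ⟨hzr, hzq, hzpos⟩ := hball z hzs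
    have hfac : (0 : ℝ) < m.factorial := by exact_mod_cast m.factorial_pos
    have hkey : c / z.re * |z.im| ≤ q := by
      rw [div_mul_eq_mul_div, div_le_iff₀ hzpos]; linarith
    have hkey0 : 0 ≤ c / z.re * |z.im| := by positivity
    have hcr : c / z.re ≤ 2 * c / r := by
      rw [div_le_div_iff₀ hzpos hrpos]
      nlinarith
    calc |z.im| ^ m / m.factorial * ‖D (m + 1) z.re‖
        ≤ |z.im| ^ m / m.factorial * (((m + 1).factorial : ℝ) * (c / z.re) ^ (m + 1)) :=
          mul_le_mul_of_nonneg_left (hbound (m + 1) z.re hzpos) (by positivity)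
      _ = ((m : ℝ) + 1) * (c / z.re) * ((c / z.re * |z.im|) ^ m) := by
          rw [Nat.factorial_succ, pow_succ, mul_pow]
          push_cast
          field_simp
      _ ≤ ((m : ℝ) + 1) * (2 * c / r) * (q ^ m) := by
          refine mul_le_mul (mul_le_mul_of_nonneg_left hcr (by positivity))
            (pow_le_pow_left₀ hkey0 hkey m) (by positivity) (by positivity)
      _ = (2 * c / r) * (((m : ℝ) + 1) * q ^ m) := by ring
  -- the second-part bound
  have h2 : ∀ z ∈ s, ∀ m : ℕ,
      (m : ℝ) * |z.im| ^ (m - 1) / m.factorial * ‖D m z.re‖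
        ≤ (2 * c / (r * q)) * ((m : ℝ) * q ^ m) := by
    intro z hzs m
    cases m with
    | zero => simp
    | succ k =>
      have hfac : (0 : ℝ) < k.factorial := by exact_mod_cast k.factorial_pos
      have heq : ((k + 1 : ℕ) : ℝ) * |z.im| ^ (k + 1 - 1) / ((k + 1).factorial : ℝ)
          = |z.im| ^ k / (k.factorial : ℝ) := by
        rw [Nat.factorial_succ]
        push_cast
        field_simp
      rw [heq]
      refine (h1 z hzs k).trans (le_of_eq ?_)
      push_cast
      field_simp
      ring
  -- full bound for the derivative series
  have hL : ∀ m : ℕ, ∀ z ∈ s, ‖LL D m z‖ ≤ u m := by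
    intro m z hzs
    exact (norm_LL_le D m z).trans (add_le_add (h1 z hzs m) (h2 z hzs m))
  -- summability of the series at the center
  have hsum0 : Summable (fun m : ℕ => gg m z₀.im • D m z₀.re) := by
    refine Summable.of_norm_bounded (summable_geometric_of_lt_one hq0.le hq1) ?_
    exact term_bound c q hc hq0.le D hbound z₀ hre him.le
  -- real differentiability of the sum with explicit derivative
  have main : HasFDerivAt (fun y : ℂ => ∑' m : ℕ, gg m y.im • D m y.re)
      (∑' m : ℕ, LL D m z₀) z₀ := by
    exact hasFDerivAt_tsum_of_isPreconnected hu Metric.isOpen_ball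
      (convex_ball z₀ ε).isPreconnected
      (fun m z hzs => hasFDerivAt_term D hderiv m z (hball z hzs).2.2)
      (fun m z hzs => hL m z hzs) hz₀s hsum0 hz₀s
  -- the limit vector
  set A : B := ∑' m : ℕ, gg m z₀.im • D (m + 1) z₀.re with hA'
  have hA_sum : Summable (fun m : ℕ => gg m z₀.im • D (m + 1) z₀.re) := by
    refine Summable.of_norm_bounded (hS1.mul_left (2 * c / r)) (fun m => ?_)
    rw [norm_smul, norm_gg]
    exact h1 z₀ hz₀s m
  have hLsum : Summable (fun m : ℕ => LL D m z₀) :=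
    Summable.of_norm_bounded hu (fun m => hL m z₀ hz₀s)
  -- the real derivative is complex linear
  have heq : (ContinuousLinearMap.toSpanSingleton ℂ A).restrictScalars ℝ
      = ∑' m : ℕ, LL D m z₀ := by
    refine ContinuousLinearMap.ext fun w => ?_
    have happ : (∑' m : ℕ, LL D m z₀) w = ∑' m : ℕ, (LL D m z₀) w :=
      (ContinuousLinearMap.apply ℝ B w).map_tsum hLsum
    rw [happ]
    have hterm : ∀ m : ℕ, (LL D m z₀) w
        = w.re • (gg m z₀.im • D (m + 1) z₀.re) + (((w.im : ℂ)) * gg' m z₀.im) • D m z₀.re := by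
      intro m
      simp only [LL, ContinuousLinearMap.add_apply, ContinuousLinearMap.smul_apply,
        ContinuousLinearMap.smulRight_apply, Complex.reCLM_apply, Complex.imCLM_apply,
        Complex.real_smul]
      rw [smul_comm]
    have hPsum : Summable (fun m : ℕ => w.re • (gg m z₀.im • D (m + 1) z₀.re)) :=
      hA_sum.const_smul w.re
    have hQ0 : (((w.im : ℂ)) * gg' 0 z₀.im) • D 0 z₀.re = 0 := by
      simp [gg']
    have hQsucc : ∀ k : ℕ, (((w.im : ℂ)) * gg' (k + 1) z₀.im) • D (k + 1) z₀.re
        = (((w.im : ℂ)) * I) • (gg k z₀.im • D (k + 1) z₀.re) := by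
      intro k
      rw [smul_smul]
      congr 1
      simp only [gg, gg', Nat.add_sub_cancel]
      rw [Nat.factorial_succ]
      push_cast
      have hfac : ((k.factorial : ℂ)) ≠ 0 := by exact_mod_cast k.factorial_ne_zero
      have hk1 : ((k : ℂ) + 1) ≠ 0 := Nat.cast_add_one_ne_zero (R := ℂ) k
      field_simp
    have hQsum : Summable (fun m : ℕ => (((w.im : ℂ)) * gg' m z₀.im) • D m z₀.re) := by
      refine Summable.of_norm_bounded
        (g := fun m => ‖((w.im : ℂ))‖ * ((2 * c / (r * q)) * ((m : ℝ) * q ^ m)))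
        ((hS2.mul_left _).mul_left _) (fun m => ?_)
      rw [norm_smul, norm_mul, norm_gg', mul_assoc]
      exact mul_le_mul_of_nonneg_left (h2 z₀ hz₀s m) (norm_nonneg _)
    have hsplit : ∑' m : ℕ, (LL D m z₀) w
        = (∑' m : ℕ, w.re • (gg m z₀.im • D (m + 1) z₀.re))
          + ∑' m : ℕ, (((w.im : ℂ)) * gg' m z₀.im) • D m z₀.re := by
      rw [← Summable.tsum_add hPsum hQsum]
      exact tsum_congr hterm
    rw [hsplit]
    have hP : (∑' m : ℕ, w.re • (gg m z₀.im • D (m + 1) z₀.re)) = w.re • A := by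
      rw [Summable.tsum_const_smul _ hA_sum]
    have hQ : (∑' m : ℕ, (((w.im : ℂ)) * gg' m z₀.im) • D m z₀.re) = (((w.im : ℂ)) * I) • A := by
      rw [Summable.tsum_eq_zero_add hQsum, hQ0, zero_add]
      have hfe : (fun k : ℕ => (((w.im : ℂ)) * gg' (k + 1) z₀.im) • D (k + 1) z₀.re)
          = fun k : ℕ => (((w.im : ℂ)) * I) • (gg k z₀.im • D (k + 1) z₀.re) :=
        funext hQsucc
      rw [hfe, Summable.tsum_const_smul _ hA_sum]
    rw [hP, hQ]
    have hres : (ContinuousLinearMap.toSpanSingleton ℂ A).restrictScalars ℝ w = w • A := rfl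
    rw [hres]
    have hw : w = (w.re : ℂ) + (w.im : ℂ) * I := (Complex.re_add_im w).symm
    calc w • A = ((w.re : ℂ) + (w.im : ℂ) * I) • A := by rw [← hw]
      _ = (w.re : ℂ) • A + ((w.im : ℂ) * I) • A := add_smul _ _ _
      _ = w.re • A + ((w.im : ℂ) * I) • A := by
          rw [← Complex.coe_algebraMap, algebraMap_smul]
  exact (hasFDerivAt_of_restrictScalars ℝ main heq).differentiableAt

end Statement17Aux

open Statement17Aux in
/-- Let `B` be a complex Banach space, `C > 0`, `q ∈ (0,1)`, and let
`U : (0,∞) → B` be infinitely differentiable (with derivatives `D m`, `D 0 = U`) satisfying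
`‖U^{(m)}(t)‖ ≤ m! (eC/t)^m` for all `t > 0`, `m ≥ 0`. With `θ = arctan(q/(eC))`, `U`
extends to an analytic function `V` on the sector `Σ(θ) = {Re z > 0, |arg z| < θ}`, given
there by the convergent Taylor series `V(z) = Σ_m (1/m!) U^{(m)}(Re z)(i Im z)^m`, and
`‖V(z)‖ ≤ 1/(1−q)` for all `z ∈ Σ(θ)`. -/
theorem analytic_extension_of_taylor_bounded_semigroup
    (B : Type*) [NormedAddCommGroup B] [NormedSpace ℂ B] [CompleteSpace B]
    (C q : ℝ) (hC : 0 < C) (hq : q ∈ Set.Ioo (0 : ℝ) 1)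
    (U : ℝ → B) (D : ℕ → ℝ → B) (hD0 : D 0 = U)
    (hderiv : ∀ m : ℕ, ∀ t : ℝ, 0 < t → HasDerivAt (D m) (D (m + 1) t) t)
    (hbound : ∀ m : ℕ, ∀ t : ℝ, 0 < t →
      ‖D m t‖ ≤ (m.factorial : ℝ) * (Real.exp 1 * C / t) ^ m) :
    ∃ V : ℂ → B,
      DifferentiableOn ℂ V
        {z : ℂ | 0 < z.re ∧ |z.arg| < Real.arctan (q / (Real.exp 1 * C))}
      ∧ (∀ t : ℝ, 0 < t → V t = U t)
      ∧ (∀ z : ℂ, 0 < z.re → |z.arg| < Real.arctan (q / (Real.exp 1 * C)) →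
          HasSum (fun m : ℕ => (((Complex.I * z.im) ^ m / m.factorial : ℂ)) • D m z.re) (V z))
      ∧ ∀ z : ℂ, 0 < z.re → |z.arg| < Real.arctan (q / (Real.exp 1 * C)) →
          ‖V z‖ ≤ 1 / (1 - q) := by
  obtain ⟨hq0, hq1⟩ := hq
  set c := Real.exp 1 * C with hc'
  have hc : 0 < c := mul_pos (Real.exp_pos 1) hC
  have harct_mono : StrictMono Real.arctan := Real.arctan_strictMono
  -- sector characterization
  have hsec : ∀ z : ℂ, 0 < z.re →
      (|z.arg| < Real.arctan (q / c) ↔ c * |z.im| < q * z.re) := by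
    intro z hz
    have h2 : |z.arg| < Real.pi / 2 := Complex.abs_arg_lt_pi_div_two_iff.2 (Or.inl hz)
    rw [abs_lt] at h2
    have harg : z.arg = Real.arctan (z.im / z.re) := by
      rw [← Complex.tan_arg, Real.arctan_tan h2.1 h2.2]
    have habs : |z.arg| = Real.arctan (|z.im| / z.re) := by
      rw [harg]
      rcases le_or_gt 0 z.im with h | h
      · have h0 : 0 ≤ Real.arctan (z.im / z.re) := by
          rw [← Real.arctan_zero]
          exact harct_mono.monotone (div_nonneg h hz.le)
        rw [_root_.abs_of_nonneg h0, _root_.abs_of_nonneg h]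
      · have hneg : Real.arctan (z.im / z.re) < 0 := by
          rw [← Real.arctan_zero]
          exact harct_mono (div_neg_of_neg_of_pos h hz)
        rw [_root_.abs_of_neg hneg, _root_.abs_of_neg h, ← Real.arctan_neg, neg_div]
    rw [habs, harct_mono.lt_iff_lt, div_lt_div_iff₀ hz hc]
    constructor <;> intro h <;> linarith
  set V : ℂ → B := fun z => ∑' m : ℕ, ((Complex.I * z.im) ^ m / m.factorial : ℂ) • D m z.re
    with hV'
  have hterm : ∀ z : ℂ, 0 < z.re → c * |z.im| ≤ q * z.re → ∀ m : ℕ,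
      ‖((Complex.I * z.im) ^ m / m.factorial : ℂ) • D m z.re‖ ≤ q ^ m := by
    intro z hz him m
    exact term_bound c q hc hq0.le D hbound z hz him m
  have hsummable : ∀ z : ℂ, 0 < z.re → c * |z.im| ≤ q * z.re →
      Summable (fun m : ℕ => ((Complex.I * z.im) ^ m / m.factorial : ℂ) • D m z.re) := by
    intro z hz him
    exact Summable.of_norm_bounded (summable_geometric_of_lt_one hq0.le hq1)
      (hterm z hz him)
  refine ⟨V, ?_, ?_, ?_, ?_⟩
  · intro z hz
    obtain ⟨hz1, hz2⟩ := hz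
    have him := (hsec z hz1).1 hz2
    exact (key_diff c q hc hq0 hq1 D hderiv hbound z hz1 him).differentiableWithinAt
  · intro t ht
    rw [hV']
    simp only
    rw [tsum_eq_single 0 (fun m hm => by simp [Complex.ofReal_im, zero_pow hm])]
    simp [hD0]
  · intro z hz1 hz2
    have him := (hsec z hz1).1 hz2
    exact (hsummable z hz1 him.le).hasSum
  · intro z hz1 hz2
    have him := (hsec z hz1).1 hz2
    have hnormsum : Summable
        (fun m : ℕ => ‖((Complex.I * z.im) ^ m / m.factorial : ℂ) • D m z.re‖) :=
      Summable.of_nonneg_of_le (fun m => norm_nonneg _) (hterm z hz1 him.le)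
        (summable_geometric_of_lt_one hq0.le hq1)
    calc ‖V z‖ ≤ ∑' m : ℕ, ‖((Complex.I * z.im) ^ m / m.factorial : ℂ) • D m z.re‖ :=
          norm_tsum_le_tsum_norm hnormsum
      _ ≤ ∑' m : ℕ, q ^ m :=
          Summable.tsum_le_tsum (hterm z hz1 him.le) hnormsum
            (summable_geometric_of_lt_one hq0.le hq1)
      _ = (1 - q)⁻¹ := tsum_geometric_of_lt_one hq0.le hq1
      _ = 1 / (1 - q) := (one_div _).symm
end
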